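/- arXiv:1406.6474 — 4 statements merged into one kernel-verified Lean document; each statement's English description precedes it below -/
import Mathlib

section
/- Let P and Q be nonempty closed convex subsets of ℝ^D, and suppose κ* = sup_{x ∈ (P ∪ Q')∖E} κ(x) < ∞. Then alternating projections between P and Q converges linearly with rate 1 − 1/κ*²: the sequences p_k and q_k converge to points p* ∈ E and q* ∈ H respectively, and ‖p_k − p*‖ ≤ 2‖p_0 − p*‖(1 − κ*⁻²)^k and ‖q_k − q*‖ ≤ 2‖q_0 − q*‖(1 − κ*⁻²)^k for all k. -/
/-!
Let `v = Π_{cl(Q - P)} 0`. Its variational inequality `‖v‖² ≤ ⟪v, y - x⟫` for `x ∈ P`, `y ∈ Q`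
gives `‖y - x‖ ≥ ‖v‖`, with equality only when `y - x = v`; hence `E = P ∩ Q'`, `H = E + v`, and
`Π_Q z = z + v`, `Π_P (z + v) = z` for `z ∈ E`. Firm nonexpansiveness of `Π_Q`, applied at `p_k`
and at each `z ∈ E`, gives `d(q_k, H)² + ‖p_k + v - q_k‖² ≤ d(p_k, E)²`, while `κ*` bounds
`d(p_k, E) ≤ κ* ‖p_k + v - q_k‖` (as `q_k - v ∈ Q'`); so `d(q_k, H)² ≤ θ d(p_k, E)²` with
`θ = 1 - κ*⁻²`, and symmetrically for the `P`-step. The iterates are Fejér monotone with respect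
to `E` (resp. `H`), and a Fejér monotone sequence `x_k` with `d(x_k, S) → 0`, `S` closed,
converges to some `x* ∈ S` with `‖x_k - x*‖ ≤ 2 d(x_k, S) ≤ 2 θ^k d(x_0, S) ≤ 2 θ^k ‖x_0 - x*‖`.
-/

open scoped RealInnerProductSpace Pointwise
open Metric Filter

noncomputable section

/-- Distance between two sets. -/
def sDist {X : Type*} [MetricSpace X] (K₁ K₂ : Set X) : ℝ :=
  sInf (Set.image2 dist K₁ K₂)

/-- `y` is the nearest-point projection of `x` onto `C`. -/
def IsProjOn {X : Type*} [MetricSpace X] (C : Set X) (x y : X) : Prop :=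
  y ∈ C ∧ ∀ z ∈ C, dist x y ≤ dist x z

section MetricSpace

variable {X : Type*} [MetricSpace X]

theorem IsProjOn.infDist_eq {C : Set X} {x y : X} (h : IsProjOn C x y) :
    infDist x C = dist x y :=
  le_antisymm (infDist_le_dist_of_mem h.1) ((le_infDist ⟨y, h.1⟩).2 h.2)

theorem sDist_comm (K₁ K₂ : Set X) : sDist K₁ K₂ = sDist K₂ K₁ := by
  rw [sDist, sDist, Set.image2_swap]
  simp only [dist_comm]

section Regularity

variable {A B : Set X} {κ : X → ℝ} {x : X}

theorem max_infDist_pos (hA : IsClosed A) (hB : IsClosed B) (hAB : (A ∩ B).Nonempty)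
    (hx : x ∉ A ∩ B) : 0 < max (infDist x A) (infDist x B) := by
  by_contra! h
  refine hx ⟨?_, ?_⟩
  · exact (hA.mem_iff_infDist_zero (hAB.mono Set.inter_subset_left)).2
      (le_antisymm ((le_max_left _ _).trans h) infDist_nonneg)
  · exact (hB.mem_iff_infDist_zero (hAB.mono Set.inter_subset_right)).2
      (le_antisymm ((le_max_right _ _).trans h) infDist_nonneg)

theorem sSup_image_nonneg
    (hκ : ∀ x, κ x = infDist x (A ∩ B) / max (infDist x A) (infDist x B)) (s : Set X) :
    0 ≤ sSup (κ '' s) := by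
  refine Real.sSup_nonneg ?_
  rintro _ ⟨y, -, rfl⟩
  rw [hκ]
  exact div_nonneg infDist_nonneg (le_max_of_le_left infDist_nonneg)

theorem infDist_inter_le_sSup_mul_max
    (hκ : ∀ x, κ x = infDist x (A ∩ B) / max (infDist x A) (infDist x B)) (hA : IsClosed A)
    (hB : IsClosed B) (hAB : (A ∩ B).Nonempty) (hbdd : BddAbove (κ '' ((A ∪ B) \ (A ∩ B))))
    (hx : x ∈ A ∪ B) :
    infDist x (A ∩ B) ≤ sSup (κ '' ((A ∪ B) \ (A ∩ B))) * max (infDist x A) (infDist x B) := by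
  by_cases hxAB : x ∈ A ∩ B
  · rw [infDist_zero_of_mem hxAB]
    exact mul_nonneg (sSup_image_nonneg hκ _) (le_max_of_le_left infDist_nonneg)
  · rw [← div_le_iff₀ (max_infDist_pos hA hB hAB hxAB), ← hκ]
    exact le_csSup hbdd ⟨x, ⟨hx, hxAB⟩, rfl⟩

theorem infDist_inter_le_sSup_mul_dist
    (hκ : ∀ x, κ x = infDist x (A ∩ B) / max (infDist x A) (infDist x B)) (hA : IsClosed A)
    (hB : IsClosed B) (hAB : (A ∩ B).Nonempty) (hbdd : BddAbove (κ '' ((A ∪ B) \ (A ∩ B))))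
    {y : X} (hxy : x ∈ A ∧ y ∈ B ∨ x ∈ B ∧ y ∈ A) :
    infDist x (A ∩ B) ≤ sSup (κ '' ((A ∪ B) \ (A ∩ B))) * dist x y := by
  have hmax : max (infDist x A) (infDist x B) ≤ dist x y := by
    rcases hxy with ⟨hx, hy⟩ | ⟨hx, hy⟩
    · rw [infDist_zero_of_mem hx]
      exact max_le dist_nonneg (infDist_le_dist_of_mem hy)
    · rw [infDist_zero_of_mem hx]
      exact max_le (infDist_le_dist_of_mem hy) dist_nonneg
  have hx : x ∈ A ∪ B := by rcases hxy with ⟨hx, -⟩ | ⟨hx, -⟩ <;> simp [hx]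
  exact (infDist_inter_le_sSup_mul_max hκ hA hB hAB hbdd hx).trans
    (mul_le_mul_of_nonneg_left hmax (sSup_image_nonneg hκ _))

/-- If `A ∪ B ⊆ A ∩ B` the supremum is taken over the empty set, where `sSup ∅ = 0`. -/
theorem sSup_eq_zero_or_one_le
    (hκ : ∀ x, κ x = infDist x (A ∩ B) / max (infDist x A) (infDist x B)) (hA : IsClosed A)
    (hB : IsClosed B) (hAB : (A ∩ B).Nonempty) (hbdd : BddAbove (κ '' ((A ∪ B) \ (A ∩ B)))) :
    sSup (κ '' ((A ∪ B) \ (A ∩ B))) = 0 ∨ 1 ≤ sSup (κ '' ((A ∪ B) \ (A ∩ B))) := by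
  rcases ((A ∪ B) \ (A ∩ B)).eq_empty_or_nonempty with h | ⟨x, hx⟩
  · left
    rw [h, Set.image_empty, Real.sSup_empty]
  · right
    refine le_trans ?_ (le_csSup hbdd ⟨x, hx, rfl⟩)
    rw [hκ, one_le_div (max_infDist_pos hA hB hAB hx.2)]
    exact max_le (infDist_le_infDist_of_subset Set.inter_subset_left hAB)
      (infDist_le_infDist_of_subset Set.inter_subset_right hAB)

end Regularity

section Fejer

variable {S : Set X} {x : ℕ → X}

theorem dist_le_two_mul_infDist_of_antitone (hS : S.Nonempty)
    (hx : ∀ z ∈ S, Antitone fun k => dist (x k) z) {k m : ℕ} (hkm : k ≤ m) :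
    dist (x k) (x m) ≤ 2 * infDist (x k) S := by
  have : dist (x k) (x m) / 2 ≤ infDist (x k) S := (le_infDist hS).2 fun z hz => by
    linarith [dist_triangle_right (x k) (x m) z, hx z hz hkm]
  linarith

theorem exists_tendsto_of_antitone_dist [CompleteSpace X] (hSc : IsClosed S) (hS : S.Nonempty)
    (hx : ∀ z ∈ S, Antitone fun k => dist (x k) z)
    (hlim : Tendsto (fun k => infDist (x k) S) atTop (nhds 0)) :
    ∃ x' ∈ S, Tendsto x atTop (nhds x') ∧ ∀ k, dist (x k) x' ≤ 2 * infDist (x k) S := by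
  have hcauchy : CauchySeq x := by
    refine cauchySeq_of_le_tendsto_0 (fun N => 4 * infDist (x N) S) (fun n m N hn hm => ?_)
      (by simpa using hlim.const_mul 4)
    linarith [dist_triangle_left (x n) (x m) (x N), dist_le_two_mul_infDist_of_antitone hS hx hn,
      dist_le_two_mul_infDist_of_antitone hS hx hm]
  obtain ⟨x', hx'⟩ := cauchySeq_tendsto_of_complete hcauchy
  have hx'S : x' ∈ S := (hSc.mem_iff_infDist_zero hS).2 <|
    tendsto_nhds_unique (((continuous_infDist_pt S).tendsto x').comp hx') hlim
  refine ⟨x', hx'S, hx', fun k => le_of_tendsto (tendsto_const_nhds.dist hx') ?_⟩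
  filter_upwards [eventually_ge_atTop k] with m hm
  exact dist_le_two_mul_infDist_of_antitone hS hx hm

theorem exists_tendsto_of_antitone_dist_of_infDist_le [CompleteSpace X] (hSc : IsClosed S)
    (hS : S.Nonempty) (hx : ∀ z ∈ S, Antitone fun k => dist (x k) z) {θ : ℝ} (hθ : 0 ≤ θ)
    (hθ₁ : θ < 1 ∨ infDist (x 0) S = 0)
    (hdecay : ∀ k, infDist (x (k + 1)) S ≤ θ * infDist (x k) S) :
    ∃ x' ∈ S, Tendsto x atTop (nhds x') ∧ ∀ k, dist (x k) x' ≤ 2 * dist (x 0) x' * θ ^ k := by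
  have hgeom : ∀ k, infDist (x k) S ≤ infDist (x 0) S * θ ^ k := by
    intro k
    induction k with
    | zero => simp
    | succ k ih => calc
        infDist (x (k + 1)) S ≤ θ * infDist (x k) S := hdecay k
        _ ≤ θ * (infDist (x 0) S * θ ^ k) := by gcongr
        _ = infDist (x 0) S * θ ^ (k + 1) := by ring
  have hlim : Tendsto (fun k => infDist (x 0) S * θ ^ k) atTop (nhds 0) := by
    rcases hθ₁ with hθ₁ | h0
    · simpa using (tendsto_pow_atTop_nhds_zero_of_lt_one hθ hθ₁).const_mul (infDist (x 0) S)
    · simp [h0]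
  obtain ⟨x', hx'S, hx', hdist⟩ :=
    exists_tendsto_of_antitone_dist hSc hS hx (squeeze_zero (fun _ => infDist_nonneg) hgeom hlim)
  refine ⟨x', hx'S, hx', fun k => ?_⟩
  calc dist (x k) x' ≤ 2 * infDist (x k) S := hdist k
    _ ≤ 2 * (infDist (x 0) S * θ ^ k) := by gcongr; exact hgeom k
    _ ≤ 2 * dist (x 0) x' * θ ^ k := by
      rw [← mul_assoc]
      gcongr
      exact infDist_le_dist_of_mem hx'S

end Fejer

end MetricSpace

section NormedGroup

variable {F : Type*} [NormedAddCommGroup F]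

theorem sDist_eq_infDist_zero_sub {P Q : Set F} (hP : P.Nonempty) (hQ : Q.Nonempty) :
    sDist P Q = infDist 0 (Q - P) := by
  have himage : Set.image2 dist P Q = (dist 0 ·) '' (Q - P) := by
    rw [← Set.image2_sub, Set.image_image2, Set.image2_swap]
    congr 1
    ext a b
    rw [dist_zero_left, ← dist_eq_norm, dist_comm]
  rw [sDist, himage]
  exact (isGLB_infDist (hQ.sub hP)).csInf_eq ((hQ.sub hP).image _)

theorem infDist_le_infDist_sub {S T : Set F} {u : F} (hS : S.Nonempty)
    (hST : ∀ z ∈ S, z + u ∈ T) (x : F) : infDist x T ≤ infDist (x - u) S :=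
  (le_infDist hS).2 fun z hz => by
    simpa only [dist_eq_norm, sub_sub, add_comm u] using infDist_le_dist_of_mem (x := x) (hST z hz)

end NormedGroup

theorem sq_le_one_sub_inv_sq_mul_sq {a b c κ : ℝ} (h : a ^ 2 + b ^ 2 ≤ c ^ 2) (hc : 0 ≤ c)
    (hcb : c ≤ κ * b) : a ^ 2 ≤ (1 - (κ ^ 2)⁻¹) * c ^ 2 := by
  have hb : (κ ^ 2)⁻¹ * c ^ 2 ≤ b ^ 2 := by
    calc (κ ^ 2)⁻¹ * c ^ 2 ≤ (κ ^ 2)⁻¹ * (κ * b) ^ 2 := by gcongr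
      _ ≤ b ^ 2 := by
        rcases eq_or_ne κ 0 with rfl | hκ
        · simpa using sq_nonneg b
        · rw [mul_pow, ← mul_assoc, inv_mul_cancel₀ (pow_ne_zero 2 hκ), one_mul]
  linarith

variable {F : Type*} [NormedAddCommGroup F] [InnerProductSpace ℝ F]

namespace IsProjOn

variable {C : Set F} {x y : F}

theorem real_inner_sub_sub_nonpos (hC : Convex ℝ C) (h : IsProjOn C x y) {z : F} (hz : z ∈ C) :
    ⟪x - y, z - y⟫ ≤ 0 := by
  have : Nonempty C := ⟨⟨y, h.1⟩⟩
  refine (norm_eq_iInf_iff_real_inner_le_zero hC h.1).1 (le_antisymm ?_ ?_) z hz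
  · exact le_ciInf fun w => by simpa only [dist_eq_norm] using h.2 w w.2
  · exact ciInf_le ⟨0, Set.forall_mem_range.2 fun _ => norm_nonneg _⟩ (⟨y, h.1⟩ : C)

theorem norm_sub_sq_add_norm_sub_sq_le (hC : Convex ℝ C) {x₁ y₁ x₂ y₂ : F}
    (h₁ : IsProjOn C x₁ y₁) (h₂ : IsProjOn C x₂ y₂) :
    ‖y₁ - y₂‖ ^ 2 + ‖(x₁ - y₁) - (x₂ - y₂)‖ ^ 2 ≤ ‖x₁ - x₂‖ ^ 2 := by
  have h₁₂ := h₁.real_inner_sub_sub_nonpos hC h₂.1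
  have h₂₁ := h₂.real_inner_sub_sub_nonpos hC h₁.1
  simp only [← real_inner_self_eq_norm_sq, inner_sub_left, inner_sub_right, real_inner_comm]
    at h₁₂ h₂₁ ⊢
  linarith

theorem norm_sub_le (hC : Convex ℝ C) {x₁ y₁ x₂ y₂ : F}
    (h₁ : IsProjOn C x₁ y₁) (h₂ : IsProjOn C x₂ y₂) : ‖y₁ - y₂‖ ≤ ‖x₁ - x₂‖ :=
  (sq_le_sq₀ (norm_nonneg _) (norm_nonneg _)).1 <|
    (le_add_of_nonneg_right (sq_nonneg _)).trans (h₁.norm_sub_sq_add_norm_sub_sq_le hC h₂)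

theorem sq_norm_le_real_inner (hC : Convex ℝ C) (h : IsProjOn C 0 y) {z : F} (hz : z ∈ C) :
    ‖y‖ ^ 2 ≤ ⟪y, z⟫ := by
  have := h.real_inner_sub_sub_nonpos hC hz
  rw [zero_sub, inner_neg_left, inner_sub_right, real_inner_self_eq_norm_sq] at this
  linarith

theorem infDist_sq_add_sq_le {S T : Set F} {u : F} (hC : Convex ℝ C) (hS : S.Nonempty)
    (hST : ∀ z ∈ S, z + u ∈ T ∧ IsProjOn C z (z + u)) (h : IsProjOn C x y) :
    infDist y T ^ 2 + ‖x + u - y‖ ^ 2 ≤ infDist x S ^ 2 := by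
  have hsqrt : √(infDist y T ^ 2 + ‖x + u - y‖ ^ 2) ≤ infDist x S :=
    (le_infDist hS).2 fun z hz => by
      have hyT : infDist y T ≤ ‖y - (z + u)‖ := by
        simpa only [dist_eq_norm] using infDist_le_dist_of_mem (hST z hz).1
      rw [Real.sqrt_le_left dist_nonneg, dist_eq_norm]
      calc infDist y T ^ 2 + ‖x + u - y‖ ^ 2 ≤ ‖y - (z + u)‖ ^ 2 + ‖x + u - y‖ ^ 2 := by
            gcongr; exact infDist_nonneg
        _ ≤ ‖x - z‖ ^ 2 := by
          convert h.norm_sub_sq_add_norm_sub_sq_le hC (hST z hz).2 using 4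
          abel
  exact (Real.sqrt_le_left infDist_nonneg).1 hsqrt

end IsProjOn

theorem Convex.exists_isProjOn [CompleteSpace F] {C : Set F} (hconv : Convex ℝ C)
    (hC : IsClosed C) (hne : C.Nonempty) (x : F) : ∃ y, IsProjOn C x y := by
  obtain ⟨y, hy, hmin⟩ := exists_norm_eq_iInf_of_complete_convex hne hC.isComplete hconv x
  refine ⟨y, hy, fun z hz => ?_⟩
  rw [dist_eq_norm, dist_eq_norm, hmin]
  exact ciInf_le ⟨0, Set.forall_mem_range.2 fun _ => norm_nonneg _⟩ (⟨z, hz⟩ : C)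

section Gap

/-! Here `v` stands for the gap vector `Π_{cl(Q - P)} 0`, through its variational inequality
`hv`. -/

variable {P Q : Set F} {v x y : F}

theorem norm_le_norm_sub_of_gap (hv : ∀ x ∈ P, ∀ y ∈ Q, ‖v‖ ^ 2 ≤ ⟪v, y - x⟫)
    (hx : x ∈ P) (hy : y ∈ Q) : ‖v‖ ≤ ‖y - x‖ := by
  nlinarith [hv x hx y hy, real_inner_le_norm v (y - x), norm_nonneg v, norm_nonneg (y - x)]

theorem sub_eq_of_gap (hv : ∀ x ∈ P, ∀ y ∈ Q, ‖v‖ ^ 2 ≤ ⟪v, y - x⟫)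
    (hx : x ∈ P) (hy : y ∈ Q) (h : ‖y - x‖ ≤ ‖v‖) : y - x = v := by
  have hsq : ‖(y - x) - v‖ ^ 2 ≤ 0 := by
    rw [norm_sub_sq_real, real_inner_comm]
    nlinarith [hv x hx y hy, norm_nonneg (y - x)]
  rwa [← sub_eq_zero, ← norm_le_zero_iff, ← sq_le_sq₀ (norm_nonneg _) le_rfl, zero_pow two_ne_zero]

theorem gap_symm (hv : ∀ x ∈ P, ∀ y ∈ Q, ‖v‖ ^ 2 ≤ ⟪v, y - x⟫) :
    ∀ y ∈ Q, ∀ x ∈ P, ‖-v‖ ^ 2 ≤ ⟪-v, x - y⟫ := fun y hy x hx => by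
  rw [norm_neg, inner_neg_left, ← inner_neg_right, neg_sub]
  exact hv x hx y hy

theorem isProjOn_add_of_gap (hv : ∀ x ∈ P, ∀ y ∈ Q, ‖v‖ ^ 2 ≤ ⟪v, y - x⟫)
    (hx : x ∈ P) (hxv : x + v ∈ Q) : IsProjOn Q x (x + v) :=
  ⟨hxv, fun y hy => by
    rw [dist_self_add_right, dist_comm, dist_eq_norm]
    exact norm_le_norm_sub_of_gap hv hx hy⟩

theorem infDist_eq_norm_iff_of_gap [CompleteSpace F]
    (hv : ∀ x ∈ P, ∀ y ∈ Q, ‖v‖ ^ 2 ≤ ⟪v, y - x⟫) (hQconv : Convex ℝ Q) (hQ : IsClosed Q)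
    (hQne : Q.Nonempty) (hx : x ∈ P) : infDist x Q = ‖v‖ ↔ x + v ∈ Q := by
  refine ⟨fun hd => ?_, fun hxv => by
    rw [(isProjOn_add_of_gap hv hx hxv).infDist_eq, dist_self_add_right]⟩
  obtain ⟨y, hy⟩ := hQconv.exists_isProjOn hQ hQne x
  rw [hy.infDist_eq, dist_comm, dist_eq_norm] at hd
  rw [← sub_eq_of_gap hv hx hy.1 hd.le, add_sub_cancel]
  exact hy.1

end Gap

section AlternatingProjections

variable {P Q S T : Set F} {u : F} {p q : ℕ → F}

theorem antitone_dist_of_alternating (hP : Convex ℝ P) (hQ : Convex ℝ Q)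
    (hS : ∀ z ∈ S, z + u ∈ T ∧ IsProjOn Q z (z + u))
    (hT : ∀ w ∈ T, w - u ∈ S ∧ IsProjOn P w (w - u))
    (hq : ∀ k, IsProjOn Q (p k) (q k)) (hp : ∀ k, IsProjOn P (q k) (p (k + 1)))
    {z : F} (hz : z ∈ S) : Antitone fun k => dist (p k) z := by
  refine antitone_nat_of_succ_le fun k => ?_
  have hzu := hT (z + u) (hS z hz).1
  rw [add_sub_cancel_right] at hzu
  rw [dist_eq_norm, dist_eq_norm]
  exact ((hp k).norm_sub_le hP hzu.2).trans ((hq k).norm_sub_le hQ (hS z hz).2)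

theorem infDist_succ_le_of_alternating (hP : Convex ℝ P) (hQ : Convex ℝ Q)
    (hS : ∀ z ∈ S, z + u ∈ T ∧ IsProjOn Q z (z + u))
    (hT : ∀ w ∈ T, w - u ∈ S ∧ IsProjOn P w (w - u))
    (hq : ∀ k, IsProjOn Q (p k) (q k)) (hp : ∀ k, IsProjOn P (q k) (p (k + 1)))
    (hSne : S.Nonempty) (hTne : T.Nonempty) {κ : ℝ} (hθ : 0 ≤ 1 - (κ ^ 2)⁻¹)
    (hregS : ∀ k, infDist (p k) S ≤ κ * ‖p k + u - q k‖)
    (hregT : ∀ k, infDist (q k) T ≤ κ * ‖q k - u - p (k + 1)‖) (k : ℕ) :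
    infDist (p (k + 1)) S ≤ (1 - (κ ^ 2)⁻¹) * infDist (p k) S := by
  have hT' : ∀ w ∈ T, w + -u ∈ S ∧ IsProjOn P w (w + -u) := by
    simpa only [← sub_eq_add_neg] using hT
  have hq_step := sq_le_one_sub_inv_sq_mul_sq ((hq k).infDist_sq_add_sq_le hQ hSne hS)
    infDist_nonneg (hregS k)
  have hp_step := sq_le_one_sub_inv_sq_mul_sq ((hp k).infDist_sq_add_sq_le hP hTne hT')
    infDist_nonneg (by simpa only [← sub_eq_add_neg] using hregT k)
  rw [← sq_le_sq₀ infDist_nonneg (mul_nonneg hθ infDist_nonneg)]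
  calc infDist (p (k + 1)) S ^ 2
      ≤ (1 - (κ ^ 2)⁻¹) * ((1 - (κ ^ 2)⁻¹) * infDist (p k) S ^ 2) :=
        hp_step.trans (mul_le_mul_of_nonneg_left hq_step hθ)
    _ = ((1 - (κ ^ 2)⁻¹) * infDist (p k) S) ^ 2 := by ring

theorem exists_tendsto_of_alternating [CompleteSpace F] (hP : Convex ℝ P) (hQ : Convex ℝ Q)
    (hS : ∀ z ∈ S, z + u ∈ T ∧ IsProjOn Q z (z + u))
    (hT : ∀ w ∈ T, w - u ∈ S ∧ IsProjOn P w (w - u))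
    (hq : ∀ k, IsProjOn Q (p k) (q k)) (hp : ∀ k, IsProjOn P (q k) (p (k + 1)))
    (hSc : IsClosed S) (hSne : S.Nonempty) (hTne : T.Nonempty) {κ : ℝ} (hκ : κ = 0 ∨ 1 ≤ κ)
    (hregS : ∀ k, infDist (p k) S ≤ κ * ‖p k + u - q k‖)
    (hregT : ∀ k, infDist (q k) T ≤ κ * ‖q k - u - p (k + 1)‖) :
    ∃ p' ∈ S, Tendsto p atTop (nhds p') ∧
      ∀ k, ‖p k - p'‖ ≤ 2 * ‖p 0 - p'‖ * (1 - (κ ^ 2)⁻¹) ^ k := by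
  have hθ : 0 ≤ 1 - (κ ^ 2)⁻¹ ∧ (1 - (κ ^ 2)⁻¹ < 1 ∨ infDist (p 0) S = 0) := by
    rcases hκ with rfl | hκ
    -- `θ = 1 - 0⁻¹ = 1`, but then `hregS 0` forces `infDist (p 0) S = 0`
    · simpa using le_antisymm (by simpa using hregS 0) infDist_nonneg
    · have hκ2 : 1 ≤ κ ^ 2 := one_le_pow₀ hκ
      exact ⟨sub_nonneg.2 (inv_le_one_of_one_le₀ hκ2),
        Or.inl (sub_lt_self _ (inv_pos.2 (zero_lt_one.trans_le hκ2)))⟩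
  simpa only [dist_eq_norm] using exists_tendsto_of_antitone_dist_of_infDist_le hSc hSne
    (fun z hz => antitone_dist_of_alternating hP hQ hS hT hq hp hz) hθ.1 hθ.2
    (infDist_succ_le_of_alternating hP hQ hS hT hq hp hSne hTne hθ.1 hregS hregT)

end AlternatingProjections

theorem exists_tendsto_alternating_of_gap [CompleteSpace F] {P Q E H : Set F} {v : F}
    {p q : ℕ → F} (hPconv : Convex ℝ P) (hQconv : Convex ℝ Q) (hPc : IsClosed P)
    (hQc : IsClosed Q) (hv : ∀ x ∈ P, ∀ y ∈ Q, ‖v‖ ^ 2 ≤ ⟪v, y - x⟫)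
    (hE : ∀ x, x ∈ E ↔ x ∈ P ∧ x + v ∈ Q) (hH : ∀ y, y ∈ H ↔ y ∈ Q ∧ y - v ∈ P)
    (hEne : E.Nonempty) {κ : ℝ} (hκ : κ = 0 ∨ 1 ≤ κ)
    (hregP : ∀ x ∈ P, ∀ y, y + v ∈ Q → infDist x E ≤ κ * dist x y)
    (hregQ : ∀ y, y + v ∈ Q → ∀ x ∈ P, infDist y E ≤ κ * dist y x)
    (hp0 : p 0 ∈ P) (hq : ∀ k, IsProjOn Q (p k) (q k)) (hp : ∀ k, IsProjOn P (q k) (p (k + 1))) :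
    ∃ pstar ∈ E, ∃ qstar ∈ H,
      Tendsto p atTop (nhds pstar) ∧ Tendsto q atTop (nhds qstar) ∧
      ∀ k, ‖p k - pstar‖ ≤ 2 * ‖p 0 - pstar‖ * (1 - (κ ^ 2)⁻¹) ^ k ∧
        ‖q k - qstar‖ ≤ 2 * ‖q 0 - qstar‖ * (1 - (κ ^ 2)⁻¹) ^ k := by
  have hpP : ∀ k, p k ∈ P := fun k => by cases k <;> simp [hp0, (hp _).1]
  have hqQ' : ∀ k, q k - v + v ∈ Q := fun k => by simpa using (hq k).1
  have hEH : ∀ z ∈ E, z + v ∈ H ∧ IsProjOn Q z (z + v) := fun z hz => by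
    obtain ⟨hzP, hzQ⟩ := (hE z).1 hz
    exact ⟨(hH _).2 ⟨hzQ, by simpa using hzP⟩, isProjOn_add_of_gap hv hzP hzQ⟩
  have hHE : ∀ w ∈ H, w - v ∈ E ∧ IsProjOn P w (w - v) := fun w hw => by
    obtain ⟨hwQ, hwP⟩ := (hH w).1 hw
    refine ⟨(hE _).2 ⟨hwP, by simpa using hwQ⟩, ?_⟩
    simpa only [sub_eq_add_neg] using
      isProjOn_add_of_gap (gap_symm hv) hwQ (by simpa only [sub_eq_add_neg] using hwP)
  have hregE : ∀ k, infDist (p k) E ≤ κ * ‖p k + v - q k‖ := fun k => by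
    simpa only [dist_eq_norm, sub_sub_eq_add_sub] using hregP _ (hpP k) _ (hqQ' k)
  have hregH : ∀ k, infDist (q k) H ≤ κ * ‖q k - v - p (k + 1)‖ := fun k =>
    (infDist_le_infDist_sub hEne (fun z hz => (hEH z hz).1) _).trans <| by
      simpa only [dist_eq_norm] using hregQ _ (hqQ' k) _ (hp k).1
  have hEc : IsClosed E := (Set.ext hE : E = P ∩ (· + v) ⁻¹' Q) ▸
    hPc.inter (hQc.preimage (continuous_add_const v))
  have hHc : IsClosed H := (Set.ext hH : H = Q ∩ (· - v) ⁻¹' P) ▸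
    hQc.inter (hPc.preimage (continuous_sub_right v))
  have hHne : H.Nonempty := ⟨_, (hEH _ hEne.some_mem).1⟩
  obtain ⟨pstar, hpE, hplim, hpk⟩ :=
    exists_tendsto_of_alternating hPconv hQconv hEH hHE hq hp hEc hEne hHne hκ hregE hregH
  obtain ⟨qstar, hqH, hqlim, hqk⟩ := exists_tendsto_of_alternating (u := -v)
    (q := fun k => p (k + 1)) hQconv hPconv (by simpa only [← sub_eq_add_neg] using hHE)
    (by simpa only [sub_neg_eq_add] using hEH) hp (fun k => hq (k + 1)) hHc hHne hEne hκ
    (by simpa only [← sub_eq_add_neg] using hregH)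
    (fun k => by simpa only [sub_neg_eq_add] using hregE (k + 1))
  exact ⟨pstar, hpE, qstar, hqH, hplim, hqlim, fun k => ⟨hpk k, hqk k⟩⟩

theorem stmt0 {D : ℕ} (P Q : Set (EuclideanSpace ℝ (Fin D)))
    (hPne : P.Nonempty) (hQne : Q.Nonempty)
    (hPc : IsClosed P) (hQc : IsClosed Q)
    (hPconv : Convex ℝ P) (hQconv : Convex ℝ Q)
    (v : EuclideanSpace ℝ (Fin D)) (hv : IsProjOn (closure (Q - P)) 0 v)
    (E H' Q' : Set (EuclideanSpace ℝ (Fin D)))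
    (hE : E = {p ∈ P | infDist p Q = sDist P Q})
    (hH : H' = {q ∈ Q | infDist q P = sDist Q P})
    (hQ' : Q' = (fun q => q - v) '' Q)
    (hEne : E.Nonempty)
    (κ : EuclideanSpace ℝ (Fin D) → ℝ)
    (hκ : ∀ x, κ x = infDist x E / max (infDist x P) (infDist x Q'))
    (hfin : BddAbove (κ '' ((P ∪ Q') \ E)))
    (κstar : ℝ) (hκstar : κstar = sSup (κ '' ((P ∪ Q') \ E)))
    (p q : ℕ → EuclideanSpace ℝ (Fin D))
    (hp0 : p 0 ∈ P)
    (hq : ∀ k, IsProjOn Q (p k) (q k))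
    (hp : ∀ k, IsProjOn P (q k) (p (k + 1))) :
    ∃ pstar ∈ E, ∃ qstar ∈ H',
      Tendsto p atTop (nhds pstar) ∧ Tendsto q atTop (nhds qstar) ∧
      ∀ k, ‖p k - pstar‖ ≤ 2 * ‖p 0 - pstar‖ * (1 - (κstar ^ 2)⁻¹) ^ k ∧
        ‖q k - qstar‖ ≤ 2 * ‖q 0 - qstar‖ * (1 - (κstar ^ 2)⁻¹) ^ k := by
  have hgap : ∀ x ∈ P, ∀ y ∈ Q, ‖v‖ ^ 2 ≤ ⟪v, y - x⟫ := fun x hx y hy =>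
    hv.sq_norm_le_real_inner (hQconv.sub hPconv).closure (subset_closure (Set.sub_mem_sub hy hx))
  have hdist : sDist P Q = ‖v‖ := by
    rw [sDist_eq_infDist_zero_sub hPne hQne, ← infDist_closure, hv.infDist_eq, dist_zero_left]
  have hEmem : ∀ x, x ∈ E ↔ x ∈ P ∧ x + v ∈ Q := fun x => by
    rw [hE, hdist, Set.mem_sep_iff]
    exact and_congr_right (infDist_eq_norm_iff_of_gap hgap hQconv hQc hQne)
  have hHmem : ∀ y, y ∈ H' ↔ y ∈ Q ∧ y - v ∈ P := fun y => by
    rw [hH, sDist_comm, hdist, ← norm_neg, Set.mem_sep_iff, sub_eq_add_neg]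
    exact and_congr_right (infDist_eq_norm_iff_of_gap (gap_symm hgap) hPconv hPc hPne)
  have hQ'mem : ∀ x, x ∈ Q' ↔ x + v ∈ Q := fun x => by
    rw [hQ']
    exact ⟨by rintro ⟨y, hy, rfl⟩; simpa using hy, fun h => ⟨x + v, h, add_sub_cancel_right x v⟩⟩
  have hEPQ' : E = P ∩ Q' := by ext x; simp only [hEmem, hQ'mem, Set.mem_inter_iff]
  have hQ'c : IsClosed Q' :=
    (Set.ext hQ'mem : Q' = (· + v) ⁻¹' Q) ▸ hQc.preimage (continuous_add_const v)
  subst hEPQ' hκstar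
  have hreg : ∀ x y, x ∈ P ∧ y ∈ Q' ∨ x ∈ Q' ∧ y ∈ P →
      infDist x (P ∩ Q') ≤ sSup (κ '' ((P ∪ Q') \ (P ∩ Q'))) * dist x y :=
    fun x y => infDist_inter_le_sSup_mul_dist hκ hPc hQ'c hEne hfin
  exact exists_tendsto_alternating_of_gap hPconv hQconv hPc hQc hgap hEmem hHmem hEne
    (sSup_eq_zero_or_one_le hκ hPc hQ'c hEne hfin)
    (fun x hx y hy => hreg x y (Or.inl ⟨hx, (hQ'mem y).2 hy⟩))
    (fun y hy x hx => hreg y x (Or.inr ⟨(hQ'mem y).2 hy, hx⟩)) hp0 hq hp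
end
end

section
/- Let P and Q be polyhedra in ℝ^D (intersections of finitely many halfspaces) with E nonempty, and let p ∈ P ∖ E. Then there exist x, y ∈ ℝ^D such that the faces P_x and Q_y are nonempty and 1 − 1/κ(p)² ≤ c_F(aff₀(P_x), aff₀(Q_y))². The analogous statement holds when p ∈ P ∖ E is replaced by q ∈ Q' ∖ E. -/
/-!
Let `e` be the point of `E` closest to `p`; since `v` is the minimal displacement from `P` to `Q`,
`E = P ∩ Q'`. Near `e` the polyhedra `P` and `Q'` coincide with their tangent cones at `e`, and
`p - e` makes an obtuse angle with every vector of the intersection `K` of these cones, so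
`d(p, E) ≤ d(p - e, K)` while `d(p, Q') = ‖(p - e) - (q - e)‖` for the nearest point `q` of `Q'`.

For two polyhedral cones and points `p`, `q` of them, let `U`, `V` be the subspaces cut out by
the constraints active at `p` and at `q`, and `m` the projection of `p` onto `U ⊓ V`. The
Friedrichs angle gives `(1 - c_F(U, V)²) ‖p - m‖² ≤ ‖p - q‖²`. So either
`(1 - c_F(U, V)²) d(p, K)² ≤ ‖p - q‖²` already, or `m ∉ K`; then moving `p` and `q`
simultaneously towards `m` until a new constraint becomes active shrinks `‖p - q‖` and `d(p, K)`
by the same factor while strictly enlarging the active sets, and we recurse.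
Finally, the subspace cut out by the constraints active at a point of a polyhedron is `aff₀` of
an exposed face.
-/

open scoped RealInnerProductSpace Pointwise
open Metric Filter

noncomputable section

/-- A polyhedron: the intersection of finitely many halfspaces. -/
def IsPolyhedron {H : Type*} [NormedAddCommGroup H] [InnerProductSpace ℝ H]
    (P : Set H) : Prop :=
  ∃ (n : ℕ) (a : Fin n → H) (b : Fin n → ℝ), P = {x | ∀ i, ⟪a i, x⟫ ≤ b i}

/-- The face of `P` in direction `x`: the set of maximizers of `⟪x, ·⟫` over `P`. -/
def face {H : Type*} [NormedAddCommGroup H] [InnerProductSpace ℝ H]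
    (P : Set H) (x : H) : Set H :=
  {p ∈ P | ∀ q ∈ P, ⟪x, q⟫ ≤ ⟪x, p⟫}

/-- `aff₀ C`: the affine hull of `C` translated to contain the origin,
as a linear subspace. -/
def aff0 {H : Type*} [NormedAddCommGroup H] [InnerProductSpace ℝ H]
    (C : Set H) : Submodule ℝ H :=
  (affineSpan ℝ C).direction

/-- The cosine of the Friedrichs angle between two subspaces. -/
def friedrichs {H : Type*} [NormedAddCommGroup H] [InnerProductSpace ℝ H]
    (U V : Submodule ℝ H) : ℝ :=
  sSup {t | ∃ u ∈ U ⊓ (U ⊓ V)ᗮ, ∃ v ∈ V ⊓ (U ⊓ V)ᗮ,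
    ‖u‖ ≤ 1 ∧ ‖v‖ ≤ 1 ∧ t = ⟪u, v⟫}

open Topology

section Friedrichs

variable {H : Type*} [NormedAddCommGroup H] [InnerProductSpace ℝ H] {U V : Submodule ℝ H}

lemma real_inner_le_one {u v : H} (hu : ‖u‖ ≤ 1) (hv : ‖v‖ ≤ 1) : ⟪u, v⟫ ≤ 1 :=
  (real_inner_le_norm u v).trans (mul_le_one₀ hu (norm_nonneg v) hv)

lemma friedrichs_set_bddAbove (U V : Submodule ℝ H) :
    BddAbove {t | ∃ u ∈ U ⊓ (U ⊓ V)ᗮ, ∃ v ∈ V ⊓ (U ⊓ V)ᗮ,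
      ‖u‖ ≤ 1 ∧ ‖v‖ ≤ 1 ∧ t = ⟪u, v⟫} :=
  ⟨1, by rintro _ ⟨u, -, v, -, hu, hv, rfl⟩; exact real_inner_le_one hu hv⟩

lemma inner_le_friedrichs {u v : H} (hu : u ∈ U ⊓ (U ⊓ V)ᗮ) (hv : v ∈ V ⊓ (U ⊓ V)ᗮ)
    (hu1 : ‖u‖ ≤ 1) (hv1 : ‖v‖ ≤ 1) : ⟪u, v⟫ ≤ friedrichs U V :=
  le_csSup (friedrichs_set_bddAbove U V) ⟨u, hu, v, hv, hu1, hv1, rfl⟩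

lemma friedrichs_nonneg (U V : Submodule ℝ H) : 0 ≤ friedrichs U V := by
  simpa using inner_le_friedrichs (U := U) (V := V) (zero_mem _) (zero_mem _)
    (by simp) (by simp)

lemma friedrichs_le_one (U V : Submodule ℝ H) : friedrichs U V ≤ 1 :=
  csSup_le ⟨0, 0, zero_mem _, 0, zero_mem _, by simp⟩ <| by
    rintro _ ⟨u, -, v, -, hu, hv, rfl⟩; exact real_inner_le_one hu hv

lemma one_sub_friedrichs_sq_nonneg (U V : Submodule ℝ H) : 0 ≤ 1 - friedrichs U V ^ 2 := by
  nlinarith [friedrichs_nonneg U V, friedrichs_le_one U V]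

lemma friedrichs_comm (U V : Submodule ℝ H) : friedrichs U V = friedrichs V U := by
  unfold friedrichs
  rw [inf_comm U V]
  congr 1
  ext t
  constructor <;>
  · rintro ⟨u, hu, v, hv, hu1, hv1, rfl⟩
    exact ⟨v, hv, u, hu, hv1, hu1, real_inner_comm v u⟩

lemma inner_le_friedrichs_mul_norm_mul_norm {u v : H} (hu : u ∈ U ⊓ (U ⊓ V)ᗮ)
    (hv : v ∈ V ⊓ (U ⊓ V)ᗮ) : ⟪u, v⟫ ≤ friedrichs U V * ‖u‖ * ‖v‖ := by
  rcases eq_or_ne u 0 with rfl | hu0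
  · simp
  rcases eq_or_ne v 0 with rfl | hv0
  · simp
  calc ⟪u, v⟫ = ‖u‖ * ‖v‖ * ⟪‖u‖⁻¹ • u, ‖v‖⁻¹ • v⟫ := by
        rw [real_inner_smul_left, real_inner_smul_right]; field_simp
    _ ≤ ‖u‖ * ‖v‖ * friedrichs U V := by
        gcongr
        exact inner_le_friedrichs (Submodule.smul_mem _ _ hu) (Submodule.smul_mem _ _ hv)
          (norm_smul_inv_norm hu0).le (norm_smul_inv_norm hv0).le
    _ = friedrichs U V * ‖u‖ * ‖v‖ := by ring

lemma one_sub_friedrichs_sq_mul_le {u y : H} (hu : u ∈ U ⊓ (U ⊓ V)ᗮ) (hy : y ∈ V)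
    [(U ⊓ V).HasOrthogonalProjection] :
    (1 - friedrichs U V ^ 2) * ‖u‖ ^ 2 ≤ ‖u - y‖ ^ 2 := by
  set M := U ⊓ V
  have hy' : y - M.starProjection y ∈ V ⊓ Mᗮ :=
    ⟨V.sub_mem hy ((inf_le_right : M ≤ V) (M.starProjection_apply_mem y)),
      M.sub_starProjection_mem_orthogonal y⟩
  have hinner : ⟪u, y⟫ = ⟪u, y - M.starProjection y⟫ := by
    rw [inner_sub_right, (Submodule.mem_orthogonal' M u).1 hu.2 _ (M.starProjection_apply_mem y),
      sub_zero]
  have hy'y : ‖y - M.starProjection y‖ ≤ ‖y‖ := by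
    rw [← M.starProjection_orthogonal_val]
    exact Mᗮ.norm_starProjection_apply_le y
  have hbound := inner_le_friedrichs_mul_norm_mul_norm hu hy'
  rw [norm_sub_sq_real, hinner]
  nlinarith [sq_nonneg (‖y - M.starProjection y‖ - friedrichs U V * ‖u‖),
    norm_nonneg (y - M.starProjection y)]

end Friedrichs

lemma exists_first_hit {κ : Type*} [Finite κ] (α β : κ → ℝ) (hα : ∀ k, α k ≤ 0)
    (hαβ : ∀ k, α k = 0 → β k = 0) (hβ : ∃ k, 0 < β k) :
    ∃ θ ∈ Set.Ico (0 : ℝ) 1, (∀ k, (1 - θ) * α k + θ * β k ≤ 0) ∧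
      {k | (1 - θ) * α k + θ * β k < 0} ⊂ {k | α k < 0} := by
  have hαneg : ∀ k, 0 < β k → α k < 0 := fun k hk =>
    (hα k).lt_of_ne fun h => hk.ne' (hαβ k h)
  have hden : ∀ k, 0 < β k → α k - β k < 0 := fun k hk => by linarith [hαneg k hk]
  -- `α k / (α k - β k)` is the time at which `(1 - θ) * α k + θ * β k` vanishes
  obtain ⟨k₀, hk₀ : 0 < β k₀, hmin⟩ := Set.exists_min_image {k | 0 < β k}
    (fun k => α k / (α k - β k)) (Set.toFinite _) hβ
  set θ := α k₀ / (α k₀ - β k₀)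
  have hθ0 : 0 ≤ θ := div_nonneg_of_nonpos (hα k₀) (hden k₀ hk₀).le
  have hθ1 : θ < 1 := (div_lt_one_of_neg (hden k₀ hk₀)).2 (by linarith)
  have hhit : (1 - θ) * α k₀ + θ * β k₀ = 0 := by
    have : θ * (α k₀ - β k₀) = α k₀ := div_mul_cancel₀ _ (hden k₀ hk₀).ne
    linarith
  refine ⟨θ, ⟨hθ0, hθ1⟩, fun k => ?_, fun k hk => ?_, fun hsub => ?_⟩
  · rcases lt_or_ge 0 (β k) with hk | hk
    · have := (le_div_iff_of_neg (hden k hk)).1 (hmin k hk)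
      linarith
    · nlinarith [hα k]
  · refine (hα k).lt_of_ne fun h => ?_
    simp [h, hαβ k h] at hk
  · exact (hsub (hαneg k₀ hk₀)).ne hhit

section NearestPoint

variable {H : Type*} [NormedAddCommGroup H] {P Q : Set H} {v : H}

lemma IsProjOn.norm_le_dist (hv : IsProjOn (closure (Q - P)) 0 v) {p q : H} (hp : p ∈ P)
    (hq : q ∈ Q) : ‖v‖ ≤ dist p q := by
  simpa [dist_eq_norm, norm_sub_rev p q] using hv.2 _ (subset_closure (Set.sub_mem_sub hq hp))

lemma IsProjOn.sDist_eq_norm (hv : IsProjOn (closure (Q - P)) 0 v) : sDist P Q = ‖v‖ := by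
  have hne : (Q - P).Nonempty := closure_nonempty_iff.1 ⟨v, hv.1⟩
  refine le_antisymm (le_of_forall_pos_le_add fun ε hε => ?_) ?_
  · obtain ⟨_, ⟨q, hq, p, hp, rfl⟩, hw⟩ := Metric.mem_closure_iff.1 hv.1 ε hε
    calc sDist P Q ≤ dist p q :=
          csInf_le ⟨0, by rintro _ ⟨_, -, _, -, rfl⟩; exact dist_nonneg⟩ ⟨p, hp, q, hq, rfl⟩
      _ = ‖(q - p) - v + v‖ := by rw [sub_add_cancel, dist_eq_norm, norm_sub_rev]
      _ ≤ ‖v‖ + ε := by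
          rw [add_comm ‖v‖]
          exact (norm_add_le _ _).trans
            (add_le_add_left (by rw [← dist_eq_norm, dist_comm]; exact hw.le) _)
  · exact le_csInf (hne.of_sub_right.image2 hne.of_sub_left)
      (by rintro _ ⟨p, hp, q, hq, rfl⟩; exact hv.norm_le_dist hp hq)

variable [InnerProductSpace ℝ H]

lemma inner_sub_nonpos_of_forall_dist_le {K : Set H} (hK : Convex ℝ K) {x e : H} (he : e ∈ K)
    (hmin : ∀ y ∈ K, dist x e ≤ dist x y) : ∀ y ∈ K, ⟪x - e, y - e⟫ ≤ 0 := by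
  have : Nonempty K := ⟨⟨e, he⟩⟩
  refine (norm_eq_iInf_iff_real_inner_le_zero hK he).1 (le_antisymm (le_ciInf fun y => ?_) ?_)
  · simpa [dist_eq_norm] using hmin y y.2
  · exact ciInf_le (f := fun w : K => ‖x - w‖) ⟨0, by rintro _ ⟨y, rfl⟩; positivity⟩ ⟨e, he⟩

lemma IsProjOn.eq_of_norm_eq {C : Set H} (hC : Convex ℝ C) {z : H} (hv : IsProjOn C 0 v)
    (hz : z ∈ C) (hzv : ‖z‖ = ‖v‖) : z = v := by
  have hvar := inner_sub_nonpos_of_forall_dist_le hC hv.1 hv.2 z hz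
  rw [zero_sub, inner_neg_left, inner_sub_right, real_inner_self_eq_norm_sq] at hvar
  have hsq : ‖z - v‖ ^ 2 ≤ 0 := by
    rw [norm_sub_sq_real, hzv, real_inner_comm]; linarith
  exact sub_eq_zero.1 (norm_eq_zero.1 (pow_eq_zero_iff two_ne_zero |>.1
    (hsq.antisymm (sq_nonneg _))))

lemma IsProjOn.setOf_infDist_eq_sDist [ProperSpace H] (hP : Convex ℝ P) (hQ : Convex ℝ Q)
    (hQc : IsClosed Q) (hv : IsProjOn (closure (Q - P)) 0 v) :
    {p ∈ P | infDist p Q = sDist P Q} = P ∩ (fun q => q - v) '' Q := by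
  have hQne : Q.Nonempty := (closure_nonempty_iff.1 ⟨v, hv.1⟩).of_sub_left
  rw [hv.sDist_eq_norm]
  ext p
  constructor
  · rintro ⟨hp, hpv⟩
    obtain ⟨q, hq, hpq⟩ := hQc.exists_infDist_eq_dist hQne p
    have hqp : q - p = v := hv.eq_of_norm_eq (hQ.sub hP).closure
      (subset_closure (Set.sub_mem_sub hq hp)) (by rw [← dist_eq_norm, dist_comm, ← hpq, hpv])
    exact ⟨hp, q, hq, by rw [← hqp]; exact sub_sub_cancel q p⟩
  · rintro ⟨hp, q, hq, rfl⟩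
    refine ⟨hp, le_antisymm ?_ ((le_infDist hQne).2 fun q' hq' => hv.norm_le_dist hp hq')⟩
    simpa [dist_eq_norm] using infDist_le_dist_of_mem (x := q - v) hq

end NearestPoint

section Polyhedron

variable {H : Type*} [NormedAddCommGroup H] [InnerProductSpace ℝ H] {ι : Type*}

def polyhedron (a : ι → H) (b : ι → ℝ) : Set H := {z | ∀ i, ⟪a i, z⟫ ≤ b i}

def activeKer (a : ι → H) (b : ι → ℝ) (z : H) : Submodule ℝ H where
  carrier := {d | ∀ i, ⟪a i, z⟫ = b i → ⟪a i, d⟫ = 0}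
  add_mem' hx hy i hi := by rw [inner_add_right, hx i hi, hy i hi, add_zero]
  zero_mem' i _ := inner_zero_right _
  smul_mem' r x hx i hi := by rw [inner_smul_right, hx i hi, mul_zero]

variable {a : ι → H} {b : ι → ℝ}

@[simp] lemma mem_polyhedron {z : H} : z ∈ polyhedron a b ↔ ∀ i, ⟪a i, z⟫ ≤ b i := Iff.rfl

@[simp] lemma mem_activeKer {z d : H} :
    d ∈ activeKer a b z ↔ ∀ i, ⟪a i, z⟫ = b i → ⟪a i, d⟫ = 0 := Iff.rfl

lemma mem_activeKer_self (p : H) : p ∈ activeKer a 0 p := fun _ h => h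

lemma isClosed_polyhedron (a : ι → H) (b : ι → ℝ) : IsClosed (polyhedron a b) := by
  simp only [polyhedron, Set.ofPred_forall]
  exact isClosed_iInter fun i => isClosed_le (by fun_prop) continuous_const

lemma convex_polyhedron (a : ι → H) (b : ι → ℝ) : Convex ℝ (polyhedron a b) := by
  simp only [polyhedron, Set.ofPred_forall]
  exact convex_iInter fun i => convex_halfSpace_le (innerₛₗ ℝ (a i)).isLinear (b i)

lemma image_sub_polyhedron (a : ι → H) (b : ι → ℝ) (v : H) :
    (fun z => z - v) '' polyhedron a b = polyhedron a (fun i => b i - ⟪a i, v⟫) := by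
  ext z
  simp only [Set.mem_image, mem_polyhedron, le_sub_iff_add_le, ← inner_add_right]
  exact ⟨by rintro ⟨y, hy, rfl⟩; simpa using hy, fun hz => ⟨z + v, hz, add_sub_cancel_right z v⟩⟩

lemma activeKer_add (a : ι → H) (b : ι → ℝ) (z v : H) :
    activeKer a b (z + v) = activeKer a (fun i => b i - ⟪a i, v⟫) z := by
  ext d
  simp only [mem_activeKer, eq_sub_iff_add_eq, ← inner_add_right]

lemma eventually_add_smul_mem_polyhedron [Finite ι] {e u : H} (he : e ∈ polyhedron a b)
    (hu : ∀ i, ⟪a i, e⟫ = b i → ⟪a i, u⟫ ≤ 0) :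
    ∀ᶠ μ in 𝓝[>] (0 : ℝ), ∀ i, ⟪a i, e + μ • u⟫ ≤ b i ∧
      (⟪a i, e + μ • u⟫ = b i ↔ ⟪a i, e⟫ = b i ∧ ⟪a i, u⟫ = 0) := by
  refine Filter.eventually_all.2 fun i => ?_
  simp only [inner_add_right, inner_smul_right]
  by_cases hi : ⟪a i, e⟫ = b i
  · filter_upwards [self_mem_nhdsWithin] with μ (hμ : 0 < μ)
    simp [hi, hμ.ne', mul_nonpos_of_nonneg_of_nonpos hμ.le (hu i hi)]
  · have hlt : ⟪a i, e⟫ + 0 * ⟪a i, u⟫ < b i := by simpa using (he i).lt_of_ne hi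
    have hcont : Continuous fun μ : ℝ => ⟪a i, e⟫ + μ * ⟪a i, u⟫ := by fun_prop
    filter_upwards [nhdsWithin_le_nhds (hcont.continuousAt.eventually_lt continuousAt_const hlt)]
      with μ hμ
    simp [hμ.le, hμ.ne, hi]

end Polyhedron

section Face

variable {H : Type*} [NormedAddCommGroup H] [InnerProductSpace ℝ H] {ι : Type*}
  {a : ι → H} {b : ι → ℝ}

lemma face_polyhedron_sum {S : Finset ι} {z : H} (hz : z ∈ polyhedron a b)
    (hS : ∀ i ∈ S, ⟪a i, z⟫ = b i) :
    face (polyhedron a b) (∑ i ∈ S, a i) = {y ∈ polyhedron a b | ∀ i ∈ S, ⟪a i, y⟫ = b i} := by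
  have hle : ∀ y ∈ polyhedron a b, ⟪∑ i ∈ S, a i, y⟫ ≤ ∑ i ∈ S, b i := fun y hy => by
    rw [sum_inner]; exact Finset.sum_le_sum fun i _ => hy i
  have hzS : ⟪∑ i ∈ S, a i, z⟫ = ∑ i ∈ S, b i := by
    rw [sum_inner]; exact Finset.sum_congr rfl hS
  ext y
  refine ⟨fun ⟨hy, hmax⟩ => ⟨hy, ?_⟩, fun ⟨hy, hyS⟩ => ⟨hy, fun w hw => ?_⟩⟩
  · have hsum : ∑ i ∈ S, ⟪a i, y⟫ = ∑ i ∈ S, b i := by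
      rw [← sum_inner]; exact (hle y hy).antisymm (hzS ▸ hmax z hz)
    exact (Finset.sum_eq_sum_iff_of_le fun i _ => hy i).1 hsum
  · rw [sum_inner S a y, Finset.sum_congr rfl hyS]
    exact hle w hw

lemma exists_face_aff0_eq_activeKer [Finite ι] {z : H} (hz : z ∈ polyhedron a b) :
    ∃ x, z ∈ face (polyhedron a b) x ∧ aff0 (face (polyhedron a b) x) = activeKer a b z := by
  classical
  have := Fintype.ofFinite ι
  set S := Finset.univ.filter fun i => ⟪a i, z⟫ = b i
  have hS : ∀ i, i ∈ S ↔ ⟪a i, z⟫ = b i := by simp [S]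
  have hface := face_polyhedron_sum hz fun i hi => (hS i).1 hi
  have hzF : z ∈ face (polyhedron a b) (∑ i ∈ S, a i) := hface ▸ ⟨hz, fun i hi => (hS i).1 hi⟩
  refine ⟨∑ i ∈ S, a i, hzF, le_antisymm ?_ fun d hd => ?_⟩
  · rw [aff0, direction_affineSpan, vectorSpan_def, Submodule.span_le]
    rintro _ ⟨y₁, hy₁, y₂, hy₂, rfl⟩ i hi
    rw [hface] at hy₁ hy₂
    show ⟪a i, y₁ - y₂⟫ = 0
    rw [inner_sub_right, hy₁.2 i ((hS i).2 hi), hy₂.2 i ((hS i).2 hi), sub_self]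
  · -- `z` and a point `z + μ • d` of the face span the direction `d`
    obtain ⟨μ, hμ, hμpos⟩ := ((eventually_add_smul_mem_polyhedron hz fun i hi =>
      (hd i hi).le).and self_mem_nhdsWithin).exists
    have hmem : z + μ • d ∈ face (polyhedron a b) (∑ i ∈ S, a i) := by
      rw [hface]
      exact ⟨fun i => (hμ i).1, fun i hi => (hμ i).2.2 ⟨(hS i).1 hi, hd i ((hS i).1 hi)⟩⟩
    have hdir := vsub_mem_vectorSpan ℝ hmem hzF
    rw [vsub_eq_sub, add_sub_cancel_left] at hdir
    rw [aff0, direction_affineSpan]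
    simpa [smul_smul, inv_mul_cancel₀ (ne_of_gt hμpos)] using
      Submodule.smul_mem _ μ⁻¹ hdir

end Face

lemma mul_infDist_sq_le_of_homothety {H : Type*} [NormedAddCommGroup H] [NormedSpace ℝ H]
    {K : Set H} {p q m : H} {θ c : ℝ} (hθ0 : 0 ≤ θ)
    (hθ1 : θ < 1) (hc : 0 ≤ 1 - c ^ 2) (hfar : ‖p - m‖ ≤ infDist p K)
    (h : (1 - c ^ 2) * infDist (p + θ • (m - p)) K ^ 2 ≤
      ‖p + θ • (m - p) - (q + θ • (m - q))‖ ^ 2) :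
    (1 - c ^ 2) * infDist p K ^ 2 ≤ ‖p - q‖ ^ 2 := by
  have hpq : ‖p + θ • (m - p) - (q + θ • (m - q))‖ = (1 - θ) * ‖p - q‖ := by
    rw [show p + θ • (m - p) - (q + θ • (m - q)) = (1 - θ) • (p - q) by module, norm_smul,
      Real.norm_of_nonneg (by linarith)]
  have hdist : (1 - θ) * infDist p K ≤ infDist (p + θ • (m - p)) K := by
    have hmove : dist p (p + θ • (m - p)) = θ * ‖p - m‖ := by
      rw [dist_eq_norm, show p - (p + θ • (m - p)) = θ • (p - m) by module, norm_smul,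
        Real.norm_of_nonneg hθ0]
    have := infDist_le_infDist_add_dist (x := p) (y := p + θ • (m - p)) (s := K)
    nlinarith
  have hsq : (1 - θ) ^ 2 * ((1 - c ^ 2) * infDist p K ^ 2) ≤ (1 - θ) ^ 2 * ‖p - q‖ ^ 2 :=
    calc (1 - θ) ^ 2 * ((1 - c ^ 2) * infDist p K ^ 2)
        = (1 - c ^ 2) * ((1 - θ) * infDist p K) ^ 2 := by ring
      _ ≤ (1 - c ^ 2) * infDist (p + θ • (m - p)) K ^ 2 := by
          gcongr
          exact mul_nonneg (by linarith) infDist_nonneg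
      _ ≤ ‖p + θ • (m - p) - (q + θ • (m - q))‖ ^ 2 := h
      _ = (1 - θ) ^ 2 * ‖p - q‖ ^ 2 := by rw [hpq]; ring
  exact le_of_mul_le_mul_left hsq (pow_pos (by linarith) 2)

section Cone

variable {H : Type*} [NormedAddCommGroup H] [InnerProductSpace ℝ H] {ι ι' : Type*}
  (a : ι → H) (c : ι' → H)

def constraintValues (p q : H) : ι ⊕ ι' → ℝ :=
  Sum.elim (fun i => ⟪a i, p⟫) (fun j => ⟪c j, q⟫)

variable {a c}

lemma forall_constraintValues_nonpos_iff {p q : H} :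
    (∀ k, constraintValues a c p q k ≤ 0) ↔ p ∈ polyhedron a 0 ∧ q ∈ polyhedron c 0 := by
  simp [constraintValues]

lemma constraintValues_add_smul_sub (p q m : H) (θ : ℝ) (k : ι ⊕ ι') :
    constraintValues a c (p + θ • (m - p)) (q + θ • (m - q)) k =
      (1 - θ) * constraintValues a c p q k + θ * constraintValues a c m m k := by
  rcases k with i | j <;>
  · simp only [constraintValues, Sum.elim_inl, Sum.elim_inr, inner_add_right, inner_smul_right,
      inner_sub_right]
    ring

variable [Finite ι] [Finite ι']

lemma exists_descent_step {p q m : H} (hp : p ∈ polyhedron a 0)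
    (hq : q ∈ polyhedron c 0) (hm : m ∈ activeKer a 0 p ⊓ activeKer c 0 q)
    (hmK : m ∉ polyhedron a 0 ∩ polyhedron c 0) :
    ∃ θ ∈ Set.Ico (0 : ℝ) 1, p + θ • (m - p) ∈ polyhedron a 0 ∧
      q + θ • (m - q) ∈ polyhedron c 0 ∧
      {k | constraintValues a c (p + θ • (m - p)) (q + θ • (m - q)) k < 0}.ncard <
        {k | constraintValues a c p q k < 0}.ncard := by
  have hαβ : ∀ k, constraintValues a c p q k = 0 → constraintValues a c m m k = 0 := by
    rintro (i | j) hk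
    exacts [hm.1 i hk, hm.2 j hk]
  have hβ : ∃ k, 0 < constraintValues a c m m k := by
    by_contra! h
    exact hmK (forall_constraintValues_nonpos_iff.1 h)
  obtain ⟨θ, hθ, hle, hsub⟩ := exists_first_hit _ _
    (forall_constraintValues_nonpos_iff.2 ⟨hp, hq⟩) hαβ hβ
  simp only [← constraintValues_add_smul_sub] at hle hsub
  obtain ⟨hp', hq'⟩ := forall_constraintValues_nonpos_iff.1 hle
  exact ⟨θ, hθ, hp', hq', Set.ncard_lt_ncard hsub⟩

variable [FiniteDimensional ℝ H]

theorem exists_activeKer_friedrichs_bound_cone {p q : H} (hp : p ∈ polyhedron a 0)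
    (hq : q ∈ polyhedron c 0) :
    ∃ p' ∈ polyhedron a 0, ∃ q' ∈ polyhedron c 0,
      (1 - friedrichs (activeKer a 0 p') (activeKer c 0 q') ^ 2) *
        infDist p (polyhedron a 0 ∩ polyhedron c 0) ^ 2 ≤ ‖p - q‖ ^ 2 := by
  induction hn : {k | constraintValues a c p q k < 0}.ncard using Nat.strong_induction_on
    generalizing p q with
  | _ n ih =>
  set K := polyhedron a 0 ∩ polyhedron c 0
  set U := activeKer a 0 p
  set V := activeKer c 0 q
  by_cases hdone : (1 - friedrichs U V ^ 2) * infDist p K ^ 2 ≤ ‖p - q‖ ^ 2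
  · exact ⟨p, hp, q, hq, hdone⟩
  set m := (U ⊓ V).starProjection p
  have hmUV : m ∈ U ⊓ V := (U ⊓ V).starProjection_apply_mem p
  have hangle : (1 - friedrichs U V ^ 2) * ‖p - m‖ ^ 2 ≤ ‖p - q‖ ^ 2 := by
    have := one_sub_friedrichs_sq_mul_le
      ⟨U.sub_mem (mem_activeKer_self p) hmUV.1, (U ⊓ V).sub_starProjection_mem_orthogonal p⟩
      (V.sub_mem (mem_activeKer_self q) hmUV.2)
    rwa [sub_sub_sub_cancel_right] at this
  have hfar : ‖p - m‖ < infDist p K := by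
    have : ‖p - m‖ ^ 2 < infDist p K ^ 2 := by
      nlinarith [one_sub_friedrichs_sq_nonneg U V]
    exact (pow_lt_pow_iff_left₀ (norm_nonneg _) infDist_nonneg two_ne_zero).1 this
  have hmK : m ∉ K := fun hm => (infDist_le_dist_of_mem hm).not_gt (by rwa [dist_eq_norm])
  obtain ⟨θ, ⟨hθ0, hθ1⟩, hp', hq', hlt⟩ := exists_descent_step hp hq hmUV hmK
  obtain ⟨p'', hp'', q'', hq'', hbound⟩ := ih _ (hn ▸ hlt) hp' hq' rfl
  exact ⟨p'', hp'', q'', hq'', mul_infDist_sq_le_of_homothety hθ0 hθ1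
    (one_sub_friedrichs_sq_nonneg _ _) hfar.le hbound⟩

end Cone

section Reduction

variable {H : Type*} [NormedAddCommGroup H] [InnerProductSpace ℝ H] {ι ι' : Type*}
  [Finite ι] [Finite ι'] {a : ι → H} {b : ι → ℝ} {c : ι' → H} {d : ι' → ℝ}

-- `polyhedron (fun i : {i // ⟪a i, e⟫ = b i} => a i) 0` is the tangent cone of
-- `polyhedron a b` at `e`.
lemma exists_mem_polyhedron_activeKer_eq {e u : H} (he : e ∈ polyhedron a b)
    (hu : u ∈ polyhedron (fun i : {i // ⟪a i, e⟫ = b i} => a i) 0) :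
    ∃ z ∈ polyhedron a b,
      activeKer a b z = activeKer (fun i : {i // ⟪a i, e⟫ = b i} => a i) 0 u := by
  obtain ⟨μ, hμ⟩ := (eventually_add_smul_mem_polyhedron he fun i hi => hu ⟨i, hi⟩).exists
  refine ⟨e + μ • u, fun i => (hμ i).1, ?_⟩
  ext x
  simp [(hμ _).2]

theorem exists_activeKer_friedrichs_bound [FiniteDimensional ℝ H] {p₀ : H}
    (hp₀ : p₀ ∈ polyhedron a b) (hE : (polyhedron a b ∩ polyhedron c d).Nonempty) :
    ∃ zP ∈ polyhedron a b, ∃ zR ∈ polyhedron c d,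
      (1 - friedrichs (activeKer a b zP) (activeKer c d zR) ^ 2) *
        infDist p₀ (polyhedron a b ∩ polyhedron c d) ^ 2 ≤ infDist p₀ (polyhedron c d) ^ 2 := by
  set E := polyhedron a b ∩ polyhedron c d
  obtain ⟨e, heE, he⟩ :=
    ((isClosed_polyhedron a b).inter (isClosed_polyhedron c d)).exists_infDist_eq_dist hE p₀
  obtain ⟨r, hrR, hr⟩ := (isClosed_polyhedron c d).exists_infDist_eq_dist
    (hE.mono Set.inter_subset_right) p₀
  set A := fun i : {i // ⟪a i, e⟫ = b i} => a i
  set C := fun j : {j // ⟪c j, e⟫ = d j} => c j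
  set K := polyhedron A 0 ∩ polyhedron C 0
  have hw : p₀ - e ∈ polyhedron A 0 := fun i => by
    simpa [A, inner_sub_right, i.2] using hp₀ i
  have hq : r - e ∈ polyhedron C 0 := fun j => by
    simpa [C, inner_sub_right, j.2] using hrR j
  have hpolar : ∀ u ∈ K, ⟪p₀ - e, u⟫ ≤ 0 := by
    -- `p₀ - e` is in the normal cone of `E` at `e`, and `e + μ • u ∈ E` for small `μ > 0`
    rintro u ⟨huA, huC⟩
    obtain ⟨μ, hμP, hμR, hμ⟩ :=
      ((eventually_add_smul_mem_polyhedron heE.1 fun i hi => huA ⟨i, hi⟩).and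
        ((eventually_add_smul_mem_polyhedron heE.2 fun j hj => huC ⟨j, hj⟩).and
          self_mem_nhdsWithin)).exists
    have := inner_sub_nonpos_of_forall_dist_le
      ((convex_polyhedron a b).inter (convex_polyhedron c d)) heE
      (fun y hy => he ▸ infDist_le_dist_of_mem hy) (e + μ • u)
      ⟨fun i => (hμP i).1, fun j => (hμR j).1⟩
    rw [add_sub_cancel_left, inner_smul_right] at this
    exact nonpos_of_mul_nonpos_right this hμ
  have hdist : infDist p₀ E ≤ infDist (p₀ - e) K := by
    have hK : K.Nonempty := ⟨0, fun _ => by simp, fun _ => by simp⟩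
    rw [he, dist_eq_norm]
    refine (le_infDist hK).2 fun u hu => ?_
    rw [dist_eq_norm]
    refine (pow_le_pow_iff_left₀ (norm_nonneg _) (norm_nonneg _) two_ne_zero).1 ?_
    rw [norm_sub_sq_real (p₀ - e) u]
    nlinarith [hpolar u hu, sq_nonneg ‖u‖]
  obtain ⟨p', hp', q', hq', hbound⟩ := exists_activeKer_friedrichs_bound_cone hw hq
  obtain ⟨zP, hzP, hUP⟩ := exists_mem_polyhedron_activeKer_eq heE.1 hp'
  obtain ⟨zR, hzR, hVR⟩ := exists_mem_polyhedron_activeKer_eq heE.2 hq'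
  refine ⟨zP, hzP, zR, hzR, ?_⟩
  rw [hUP, hVR]
  calc _ ≤ (1 - friedrichs (activeKer A 0 p') (activeKer C 0 q') ^ 2) *
          infDist (p₀ - e) K ^ 2 := by
        gcongr
        · exact one_sub_friedrichs_sq_nonneg _ _
        · exact infDist_nonneg
    _ ≤ ‖p₀ - e - (r - e)‖ ^ 2 := hbound
    _ = infDist p₀ (polyhedron c d) ^ 2 := by rw [sub_sub_sub_cancel_right, ← dist_eq_norm, hr]

end Reduction

theorem exists_activeKer_one_sub_inv_sq_le {H : Type*} [NormedAddCommGroup H]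
    [InnerProductSpace ℝ H] [FiniteDimensional ℝ H] {ι ι' : Type*} [Finite ι] [Finite ι']
    {a : ι → H} {b : ι → ℝ} {c : ι' → H} {d : ι' → ℝ} {p₀ : H} (hp₀ : p₀ ∈ polyhedron a b)
    (hp₀E : p₀ ∉ polyhedron a b ∩ polyhedron c d)
    (hE : (polyhedron a b ∩ polyhedron c d).Nonempty) :
    ∃ zP ∈ polyhedron a b, ∃ zR ∈ polyhedron c d,
      1 - ((infDist p₀ (polyhedron a b ∩ polyhedron c d) /
        max (infDist p₀ (polyhedron a b)) (infDist p₀ (polyhedron c d))) ^ 2)⁻¹ ≤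
          friedrichs (activeKer a b zP) (activeKer c d zR) ^ 2 := by
  obtain ⟨zP, hzP, zR, hzR, hbound⟩ := exists_activeKer_friedrichs_bound hp₀ hE
  refine ⟨zP, hzP, zR, hzR, ?_⟩
  have hpos : 0 < infDist p₀ (polyhedron a b ∩ polyhedron c d) :=
    (((isClosed_polyhedron a b).inter (isClosed_polyhedron c d)).notMem_iff_infDist_pos hE).1 hp₀E
  rw [infDist_zero_of_mem hp₀, max_eq_right infDist_nonneg, div_pow, inv_div, sub_le_comm,
    le_div_iff₀ (by positivity)]
  exact hbound

theorem stmt2_general {D : ℕ} (P Q : Set (EuclideanSpace ℝ (Fin D)))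
    (hPpoly : IsPolyhedron P) (hQpoly : IsPolyhedron Q)
    (v : EuclideanSpace ℝ (Fin D)) (hv : IsProjOn (closure (Q - P)) 0 v)
    (E Q' : Set (EuclideanSpace ℝ (Fin D)))
    (hE : E = {p ∈ P | infDist p Q = sDist P Q})
    (hQ' : Q' = (fun q => q - v) '' Q)
    (hEne : E.Nonempty)
    (κ : EuclideanSpace ℝ (Fin D) → ℝ)
    (hκ : ∀ x, κ x = infDist x E / max (infDist x P) (infDist x Q')) :
    (∀ p ∈ P \ E, ∃ x y : EuclideanSpace ℝ (Fin D),
        (face P x).Nonempty ∧ (face Q y).Nonempty ∧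
        1 - (κ p ^ 2)⁻¹ ≤ friedrichs (aff0 (face P x)) (aff0 (face Q y)) ^ 2) ∧
    (∀ q ∈ Q' \ E, ∃ x y : EuclideanSpace ℝ (Fin D),
        (face P x).Nonempty ∧ (face Q y).Nonempty ∧
        1 - (κ q ^ 2)⁻¹ ≤ friedrichs (aff0 (face P x)) (aff0 (face Q y)) ^ 2) := by
  obtain ⟨n, a, b, hP : P = polyhedron a b⟩ := hPpoly
  obtain ⟨m, c, d, hQ : Q = polyhedron c d⟩ := hQpoly
  have hQ'poly : Q' = polyhedron c (fun j => d j - ⟪c j, v⟫) := by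
    rw [hQ', hQ, image_sub_polyhedron]
  have hEPQ : E = P ∩ Q' := by
    rw [hE, hQ', hv.setOf_infDist_eq_sDist (hP ▸ convex_polyhedron a b)
      (hQ ▸ convex_polyhedron c d) (hQ ▸ isClosed_polyhedron c d)]
  have hfaceQ : ∀ z ∈ Q', ∃ y, (face Q y).Nonempty ∧
      aff0 (face Q y) = activeKer c (fun j => d j - ⟪c j, v⟫) z := by
    rintro z hz
    obtain ⟨q, hq, rfl⟩ := hQ' ▸ hz
    obtain ⟨y, hqy, hy⟩ := exists_face_aff0_eq_activeKer (hQ ▸ hq : q ∈ polyhedron c d)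
    exact ⟨y, ⟨q, hQ ▸ hqy⟩, by rw [hQ, hy, ← activeKer_add, sub_add_cancel]⟩
  subst hP hEPQ hQ'poly
  refine ⟨fun p hp => ?_, fun q hq => ?_⟩
  · obtain ⟨zP, hzP, zR, hzR, hle⟩ := exists_activeKer_one_sub_inv_sq_le hp.1 hp.2 hEne
    obtain ⟨x, hzx, hx⟩ := exists_face_aff0_eq_activeKer hzP
    obtain ⟨y, hy, hyV⟩ := hfaceQ zR hzR
    exact ⟨x, y, ⟨zP, hzx⟩, hy, by rwa [hκ, hx, hyV]⟩
  · rw [Set.inter_comm] at hq hEne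
    obtain ⟨zR, hzR, zP, hzP, hle⟩ := exists_activeKer_one_sub_inv_sq_le hq.1 hq.2 hEne
    obtain ⟨x, hzx, hx⟩ := exists_face_aff0_eq_activeKer hzP
    obtain ⟨y, hy, hyV⟩ := hfaceQ zR hzR
    exact ⟨x, y, ⟨zP, hzx⟩, hy, by rwa [hκ, hx, hyV, friedrichs_comm, max_comm, Set.inter_comm]⟩

theorem stmt2 {D : ℕ} (P Q : Set (EuclideanSpace ℝ (Fin D)))
    (hPpoly : IsPolyhedron P) (hQpoly : IsPolyhedron Q)
    (hPne : P.Nonempty) (hQne : Q.Nonempty)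
    (v : EuclideanSpace ℝ (Fin D)) (hv : IsProjOn (closure (Q - P)) 0 v)
    (E Q' : Set (EuclideanSpace ℝ (Fin D)))
    (hE : E = {p ∈ P | infDist p Q = sDist P Q})
    (hQ' : Q' = (fun q => q - v) '' Q)
    (hEne : E.Nonempty)
    (κ : EuclideanSpace ℝ (Fin D) → ℝ)
    (hκ : ∀ x, κ x = infDist x E / max (infDist x P) (infDist x Q')) :
    (∀ p ∈ P \ E, ∃ x y : EuclideanSpace ℝ (Fin D),
        (face P x).Nonempty ∧ (face Q y).Nonempty ∧
        1 - (κ p ^ 2)⁻¹ ≤ friedrichs (aff0 (face P x)) (aff0 (face Q y)) ^ 2) ∧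
    (∀ q ∈ Q' \ E, ∃ x y : EuclideanSpace ℝ (Fin D),
        (face P x).Nonempty ∧ (face Q y).Nonempty ∧
        1 - (κ q ^ 2)⁻¹ ≤ friedrichs (aff0 (face P x)) (aff0 (face Q y)) ^ 2) :=
  stmt2_general P Q hPpoly hQpoly v hv E Q' hE hQ' hEne κ hκ
end
end

section
/- Let F be a submodular function on a ground set V with F(∅) = 0, and let B(F)_x be a nonempty face of its base polytope B(F). Then there exists a partition of V into disjoint nonempty sets A₁, …, A_M such that aff(B(F)_x) = ⋂_{m=1}^{M} {s ∈ ℝ^N : s(A₁ ∪ ⋯ ∪ A_m) = F(A₁ ∪ ⋯ ∪ A_m)}. -/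
open scoped RealInnerProductSpace
open Finset

noncomputable section

/-- A submodular set function on `Fin N` with `F ∅ = 0`. -/
def IsSubmodular {N : ℕ} (F : Finset (Fin N) → ℝ) : Prop :=
  F ∅ = 0 ∧ ∀ A B : Finset (Fin N), F (A ∪ B) + F (A ∩ B) ≤ F A + F B

/-- The base polytope of a set function. -/
def basePolytope {N : ℕ} (F : Finset (Fin N) → ℝ) :
    Set (EuclideanSpace ℝ (Fin N)) :=
  {s | (∀ A : Finset (Fin N), ∑ n ∈ A, s n ≤ F A) ∧ ∑ n, s n = F univ}

/-!
Call `A` tight if `s(A) = F(A)` for every `s` in the face. Averaging points of the face gives a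
point `p` of the face with `p(A) < F(A)` for every non-tight `A`; from such a point one can move a
little in both directions along any `v` with `v(A) = 0` for all tight `A` without leaving `B(F)`,
and then, `p` being a maximiser of `⟪x, ·⟫`, without leaving the face. So the affine hull of the
face is cut out by the tight constraints.

By submodularity the tight sets form a lattice containing `∅` and `univ`, so each `n` has a least
tight set `D(n)` (`tightClosure`) containing it, every tight set is a union of classes of
`n ↦ D(n)`, and every set closed under `n ↦ D(n)` is tight. Listing these classes along a linear
extension of inclusion of the `D(n)` (colex order) makes every prefix union tight, and the prefix
constraints pin down `s` on each class, hence on every tight set.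
-/

open scoped Topology

theorem exists_fin_surjective_le_iff {α β : Type*} [Fintype α] [LinearOrder β] (f : α → β) :
    ∃ (m : ℕ) (r : α → Fin m), Function.Surjective r ∧ ∀ a b, r a ≤ r b ↔ f a ≤ f b := by
  classical
  let e := (univ.image f).orderIsoOfFin rfl
  have hf (a : α) : f a ∈ univ.image f := mem_image_of_mem f (mem_univ a)
  refine ⟨_, fun a => e.symm ⟨f a, hf a⟩, fun i => ?_, fun a b => e.symm.le_iff_le⟩
  obtain ⟨a, -, ha⟩ := mem_image.1 (e i).2
  exact ⟨a, e.symm_apply_eq.2 (Subtype.ext ha)⟩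

section Fibers

variable {α ι M : Type*} [Fintype α] [Fintype ι] [AddCommMonoid M] (r : α → ι) (d : α → M)

theorem sum_eq_zero_of_sum_fiber_eq_zero [DecidableEq ι] {B : Finset α}
    (hB : ∀ a ∈ B, ∀ b, r b = r a → b ∈ B) (hd : ∀ a ∈ B, ∑ b with r b = r a, d b = 0) :
    ∑ a ∈ B, d a = 0 := by
  rw [← sum_fiberwise B r d]
  refine sum_eq_zero fun i _ => ?_
  rcases (B.filter (r · = i)).eq_empty_or_nonempty with hempty | ⟨a, ha⟩
  · rw [hempty, sum_empty]
  · obtain ⟨haB, rfl⟩ := mem_filter.1 ha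
    rw [← hd a haB]
    congr 1
    ext b
    simp only [mem_filter, mem_univ, true_and]
    exact ⟨And.right, fun hb => ⟨hB a haB b hb, hb⟩⟩

theorem sum_fiber_eq_zero_of_forall_sum_le_eq_zero [LinearOrder ι]
    (h : ∀ i, ∑ a with r a ≤ i, d a = 0) (i : ι) : ∑ a with r a = i, d a = 0 := by
  induction i using WellFoundedLT.induction with
  | _ i ih =>
    have hlt : ∑ a with r a < i, d a = 0 :=
      sum_eq_zero_of_sum_fiber_eq_zero r d (fun a ha b hb => by simpa [hb] using ha)
        fun a ha => ih _ (mem_filter.1 ha).2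
    have hsplit : ∑ a with r a ≤ i, d a = ∑ a with r a = i, d a + ∑ a with r a < i, d a := by
      classical
      rw [← sum_union (disjoint_filter.2 fun _ _ h₁ h₂ => h₂.ne h₁), ← filter_or]
      simp only [le_iff_eq_or_lt]
    rw [hlt, add_zero, h i] at hsplit
    exact hsplit.symm

end Fibers

section Face

variable {E : Type*} [NormedAddCommGroup E] [InnerProductSpace ℝ E]

theorem convex_face {P : Set E} (hP : Convex ℝ P) (x : E) : Convex ℝ (face P x) :=
  (ContinuousLinearMap.toExposed.isExposed (l := innerSL ℝ x)).convex hP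

theorem add_mem_face_of_sub_mem {P : Set E} {x p v : E} (hp : p ∈ face P x)
    (hadd : p + v ∈ P) (hsub : p - v ∈ P) : p + v ∈ face P x := by
  refine ⟨hadd, fun q hq => ?_⟩
  have h₁ := hp.2 _ hadd
  have h₂ := hp.2 _ hsub
  rw [inner_add_right] at h₁ ⊢
  rw [inner_sub_right] at h₂
  linarith [hp.2 q hq]

theorem Convex.exists_mem_forall_lt {C : Set E} (hC : Convex ℝ C) (hne : C.Nonempty)
    {ι : Type*} (s : Finset ι) (f : ι → E →ₗ[ℝ] ℝ) (c : ι → ℝ)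
    (hle : ∀ i, ∀ y ∈ C, f i y ≤ c i) :
    ∃ p ∈ C, ∀ i ∈ s, (∃ y ∈ C, f i y < c i) → f i p < c i := by
  classical
  induction s using Finset.induction_on with
  | empty => exact hne.imp fun p hp => ⟨hp, by simp⟩
  | insert i s _ ih =>
    obtain ⟨p, hpC, hp⟩ := ih
    by_cases hi : ∃ y ∈ C, f i y < c i
    · obtain ⟨y, hyC, hy⟩ := hi
      refine ⟨(1 / 2 : ℝ) • p + (1 / 2 : ℝ) • y, hC hpC hyC (by norm_num) (by norm_num)
        (by norm_num), fun j hj hjlt => ?_⟩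
      simp only [map_add, map_smul, smul_eq_mul]
      rcases Finset.mem_insert.1 hj with rfl | hj
      · linarith [hle j p hpC]
      · linarith [hp j hj hjlt, hle j y hyC]
    · refine ⟨p, hpC, fun j hj hjlt => ?_⟩
      rcases Finset.mem_insert.1 hj with rfl | hj
      · exact absurd hjlt hi
      · exact hp j hj hjlt

end Face

section BasePolytope

variable {N : ℕ}

theorem sum_add_smul_apply (A : Finset (Fin N)) (p v : EuclideanSpace ℝ (Fin N)) (t : ℝ) :
    ∑ n ∈ A, (p + t • v) n = ∑ n ∈ A, p n + t * ∑ n ∈ A, v n := by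
  simp [sum_add_distrib, mul_sum]

theorem convex_basePolytope (F : Finset (Fin N) → ℝ) : Convex ℝ (basePolytope F) := by
  intro s hs t ht a b ha hb hab
  have hsum (A : Finset (Fin N)) :
      ∑ n ∈ A, (a • s + b • t) n = a * ∑ n ∈ A, s n + b * ∑ n ∈ A, t n := by
    simp [sum_add_distrib, mul_sum]
  refine ⟨fun A => ?_, ?_⟩
  · calc ∑ n ∈ A, (a • s + b • t) n = a * ∑ n ∈ A, s n + b * ∑ n ∈ A, t n := hsum A
      _ ≤ a * F A + b * F A := by gcongr; exacts [hs.1 A, ht.1 A]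
      _ = F A := by rw [← add_mul, hab, one_mul]
  · rw [hsum, hs.2, ht.2, ← add_mul, hab, one_mul]

theorem eventually_add_smul_mem_basePolytope {F : Finset (Fin N) → ℝ}
    {p : EuclideanSpace ℝ (Fin N)} (hp : p ∈ basePolytope F) {v : EuclideanSpace ℝ (Fin N)}
    (hv : ∀ A, ∑ n ∈ A, p n = F A → ∑ n ∈ A, v n = 0) :
    ∀ᶠ t in 𝓝 (0 : ℝ), p + t • v ∈ basePolytope F := by
  have hA : ∀ A, ∀ᶠ t in 𝓝 (0 : ℝ), ∑ n ∈ A, (p + t • v) n ≤ F A := fun A => by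
    simp only [sum_add_smul_apply]
    rcases (hp.1 A).lt_or_eq with hlt | heq
    · refine (ContinuousAt.eventually_lt (by fun_prop) continuousAt_const ?_).mono
        fun _ => le_of_lt
      simpa using hlt
    · exact Filter.Eventually.of_forall fun t => by simp [heq, hv A heq]
  filter_upwards [Filter.eventually_all.2 hA] with t ht
  refine ⟨ht, ?_⟩
  rw [sum_add_smul_apply, hv univ hp.2, hp.2]
  ring

end BasePolytope

section Tight

variable {N : ℕ} (F : Finset (Fin N) → ℝ) (x : EuclideanSpace ℝ (Fin N))

def IsTight (A : Finset (Fin N)) : Prop :=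
  ∀ s ∈ face (basePolytope F) x, ∑ n ∈ A, s n = F A

variable {F x}

theorem exists_mem_face_forall_lt_of_not_isTight (hne : (face (basePolytope F) x).Nonempty) :
    ∃ p ∈ face (basePolytope F) x, ∀ A, ¬IsTight F x A → ∑ n ∈ A, p n < F A := by
  have happly (A : Finset (Fin N)) (s : EuclideanSpace ℝ (Fin N)) :
      (∑ n ∈ A, EuclideanSpace.projₗ n : EuclideanSpace ℝ (Fin N) →ₗ[ℝ] ℝ) s = ∑ n ∈ A, s n := by
    simp [LinearMap.sum_apply]
  obtain ⟨p, hp, hlt⟩ := (convex_face (convex_basePolytope F) x).exists_mem_forall_lt hne univ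
    (fun A => ∑ n ∈ A, EuclideanSpace.projₗ n) F (fun A y hy => by simpa [happly] using hy.1.1 A)
  refine ⟨p, hp, fun A hA => ?_⟩
  simp only [IsTight, not_forall] at hA
  obtain ⟨y, hy, hyA⟩ := hA
  simpa [happly] using hlt A (mem_univ A) ⟨y, hy, by simpa [happly] using (hy.1.1 A).lt_of_ne hyA⟩

theorem sum_eq_of_mem_affineSpan_face {A : Finset (Fin N)} (hA : IsTight F x A)
    {s : EuclideanSpace ℝ (Fin N)} (hs : s ∈ affineSpan ℝ (face (basePolytope F) x)) :
    ∑ n ∈ A, s n = F A := by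
  refine affineSpan_induction hs (fun s hs => hA s hs) fun c u v w hu hv hw => ?_
  simp [sum_add_distrib, sum_sub_distrib, ← mul_sum, hu, hv, hw]

theorem mem_affineSpan_face_of_forall_isTight (hne : (face (basePolytope F) x).Nonempty)
    {s : EuclideanSpace ℝ (Fin N)} (hs : ∀ A, IsTight F x A → ∑ n ∈ A, s n = F A) :
    s ∈ affineSpan ℝ (face (basePolytope F) x) := by
  obtain ⟨p, hp, hlt⟩ := exists_mem_face_forall_lt_of_not_isTight hne
  have hv : ∀ A, ∑ n ∈ A, p n = F A → ∑ n ∈ A, (s - p) n = 0 := fun A hpA => by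
    have hA : IsTight F x A := by_contra fun hA => (hlt A hA).ne hpA
    simp [sum_sub_distrib, hs A hA, hpA]
  obtain ⟨δ, hδ, hball⟩ :=
    Metric.eventually_nhds_iff.1 (eventually_add_smul_mem_basePolytope hp.1 hv)
  set ε := δ / 2
  have hε : 0 < ε := half_pos hδ
  have hmem (t : ℝ) (ht : |t| = ε) : p + t • (s - p) ∈ basePolytope F :=
    hball (by rw [Real.dist_eq, sub_zero, ht]; exact half_lt_self hδ)
  have hw : p + ε • (s - p) ∈ face (basePolytope F) x :=
    add_mem_face_of_sub_mem hp (hmem ε (abs_of_pos hε))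
      (by simpa only [neg_smul, ← sub_eq_add_neg] using hmem (-ε) (by rw [abs_neg, abs_of_pos hε]))
  have hs_eq : s = ε⁻¹ • ((p + ε • (s - p)) -ᵥ p) +ᵥ p := by
    simp [smul_smul, inv_mul_cancel₀ hε.ne']
  rw [hs_eq]
  exact AffineSubspace.smul_vsub_vadd_mem _ _ (subset_affineSpan ℝ _ hw)
    (subset_affineSpan ℝ _ hp) (subset_affineSpan ℝ _ hp)

theorem coe_affineSpan_face (hne : (face (basePolytope F) x).Nonempty) :
    (affineSpan ℝ (face (basePolytope F) x) : Set (EuclideanSpace ℝ (Fin N))) =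
      {s | ∀ A, IsTight F x A → ∑ n ∈ A, s n = F A} :=
  Set.ext fun _ => ⟨fun hs _ hA => sum_eq_of_mem_affineSpan_face hA hs,
    mem_affineSpan_face_of_forall_isTight hne⟩

end Tight

section Submodular

variable {N : ℕ} (F : Finset (Fin N) → ℝ) (x : EuclideanSpace ℝ (Fin N))

open Classical in
def tightClosure (n : Fin N) : Finset (Fin N) :=
  (univ.filter fun A => n ∈ A ∧ IsTight F x A).inf id

variable {F x}

theorem sum_union_eq_and_sum_inter_eq (hF : IsSubmodular F) {s : EuclideanSpace ℝ (Fin N)}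
    (hs : s ∈ basePolytope F) {A B : Finset (Fin N)}
    (hA : ∑ n ∈ A, s n = F A) (hB : ∑ n ∈ B, s n = F B) :
    ∑ n ∈ A ∪ B, s n = F (A ∪ B) ∧ ∑ n ∈ A ∩ B, s n = F (A ∩ B) := by
  have := sum_union_inter (s₁ := A) (s₂ := B) (f := fun n => s n)
  constructor <;> linarith [hs.1 (A ∪ B), hs.1 (A ∩ B), hF.2 A B]

theorem IsTight.union (hF : IsSubmodular F) {A B : Finset (Fin N)}
    (hA : IsTight F x A) (hB : IsTight F x B) : IsTight F x (A ∪ B) :=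
  fun s hs => (sum_union_eq_and_sum_inter_eq hF hs.1 (hA s hs) (hB s hs)).1

theorem IsTight.inter (hF : IsSubmodular F) {A B : Finset (Fin N)}
    (hA : IsTight F x A) (hB : IsTight F x B) : IsTight F x (A ∩ B) :=
  fun s hs => (sum_union_eq_and_sum_inter_eq hF hs.1 (hA s hs) (hB s hs)).2

theorem isTight_empty (hF : IsSubmodular F) : IsTight F x ∅ := fun _ _ => by simp [hF.1]

theorem isTight_univ : IsTight F x univ := fun _ hs => hs.1.2

theorem isTight_tightClosure (hF : IsSubmodular F) (n : Fin N) :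
    IsTight F x (tightClosure F x n) := by
  classical
  exact inf_induction isTight_univ (fun _ hA _ hB => hA.inter hF hB)
    fun _ hA => (mem_filter.1 hA).2.2

theorem mem_tightClosure_self (n : Fin N) : n ∈ tightClosure F x n := by
  classical
  simp only [tightClosure, mem_inf]
  exact fun _ hA => (mem_filter.1 hA).2.1

theorem tightClosure_subset {n : Fin N} {A : Finset (Fin N)} (hn : n ∈ A) (hA : IsTight F x A) :
    tightClosure F x n ⊆ A := by
  classical
  exact inf_le (f := id) (mem_filter.2 ⟨mem_univ _, hn, hA⟩)

theorem tightClosure_subset_tightClosure (hF : IsSubmodular F) {n m : Fin N}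
    (h : m ∈ tightClosure F x n) : tightClosure F x m ⊆ tightClosure F x n :=
  tightClosure_subset h (isTight_tightClosure hF n)

theorem isTight_of_forall_tightClosure_subset (hF : IsSubmodular F) {S : Finset (Fin N)}
    (hS : ∀ n ∈ S, tightClosure F x n ⊆ S) : IsTight F x S := by
  classical
  have hS_eq : S.sup (tightClosure F x) = S :=
    le_antisymm (Finset.sup_le hS) fun n hn => le_sup (f := tightClosure F x) hn
      (mem_tightClosure_self n)
  rw [← hS_eq]
  exact sup_induction (isTight_empty hF) (fun _ hA _ hB => hA.union hF hB)
    fun n _ => isTight_tightClosure hF n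

theorem isTight_filter_le {ι : Type*} [Preorder ι] [DecidableLE ι] (hF : IsSubmodular F)
    {r : Fin N → ι}
    (hr : ∀ a b, tightClosure F x a ⊆ tightClosure F x b → r a ≤ r b) (i : ι) :
    IsTight F x (univ.filter (r · ≤ i)) :=
  isTight_of_forall_tightClosure_subset hF fun n hn m hm => by
    simp only [mem_filter, mem_univ, true_and] at hn ⊢
    exact (hr _ _ (tightClosure_subset_tightClosure hF hm)).trans hn

theorem IsTight.mem_of_tightClosure_eq {B : Finset (Fin N)} (hB : IsTight F x B) {a b : Fin N}
    (ha : a ∈ B) (h : tightClosure F x b = tightClosure F x a) : b ∈ B :=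
  tightClosure_subset ha hB (h ▸ mem_tightClosure_self b)

end Submodular

theorem stmt5 {N : ℕ} (F : Finset (Fin N) → ℝ) (hF : IsSubmodular F)
    (x : EuclideanSpace ℝ (Fin N))
    (hne : (face (basePolytope F) x).Nonempty) :
    ∃ (M : ℕ) (A : Fin M → Finset (Fin N)),
      (∀ m, (A m).Nonempty) ∧
      (∀ n : Fin N, ∃! m : Fin M, n ∈ A m) ∧
      (affineSpan ℝ (face (basePolytope F) x) : Set (EuclideanSpace ℝ (Fin N))) =
        ⋂ m : Fin M,
          {s : EuclideanSpace ℝ (Fin N) |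
            ∑ n ∈ (univ.filter (fun m' : Fin M => m' ≤ m)).biUnion A, s n =
              F ((univ.filter (fun m' : Fin M => m' ≤ m)).biUnion A)} := by
  classical
  obtain ⟨M, r, hr_surj, hr_le⟩ :=
    exists_fin_surjective_le_iff fun n => toColex (tightClosure F x n)
  have hr_eq (a b) (h : r a = r b) : tightClosure F x a = tightClosure F x b :=
    toColex_inj.1 (le_antisymm ((hr_le a b).1 h.le) ((hr_le b a).1 h.ge))
  have hL_tight :=
    isTight_filter_le hF fun a b h => (hr_le a b).2 (Colex.toColex_le_toColex_of_subset h)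
  refine ⟨M, fun m => univ.filter (r · = m), fun m => ?_,
    fun n => ⟨r n, by simp, fun m hm => (mem_filter.1 hm).2.symm⟩, ?_⟩
  · obtain ⟨n, rfl⟩ := hr_surj m
    exact ⟨n, by simp⟩
  have hL (m : Fin M) : (univ.filter (· ≤ m)).biUnion (fun m => univ.filter (r · = m)) =
      univ.filter (r · ≤ m) := by
    ext
    simp
  simp_rw [hL, coe_affineSpan_face hne]
  ext s
  simp only [Set.mem_iInter]
  refine ⟨fun hs m => hs _ (hL_tight m), fun hs B hB => ?_⟩
  obtain ⟨s₀, hs₀⟩ := hne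
  have hfiber := sum_fiber_eq_zero_of_forall_sum_le_eq_zero r (fun n => s n - s₀ n) fun m => by
    rw [sum_sub_distrib, hs m, hL_tight m s₀ hs₀, sub_self]
  have hB_eq := sum_eq_zero_of_sum_fiber_eq_zero r (fun n => s n - s₀ n)
    (fun a ha b hb => hB.mem_of_tightClosure_eq ha (hr_eq b a hb)) fun a _ => hfiber (r a)
  rwa [sum_sub_distrib, hB s₀ hs₀, sub_eq_zero] at hB_eq
end
end

section
/- Let R ≥ 2, let V be a ground set of N elements, and for each r = 1, …, R let A_{r1}, …, A_{rM_r} be a partition of V into disjoint nonempty sets. Let G be the weighted graph whose vertices are the pairs (r,m) with 1 ≤ r ≤ R, 1 ≤ m ≤ M_r, and where the edge between (r₁,m₁) and (r₂,m₂) has weight |A_{r₁m₁} ∩ A_{r₂m₂}|. If G is connected, then its Cheeger constant satisfies h_G ≥ 2/(NR), and the second-smallest eigenvalue of its symmetric normalized Laplacian ℒ satisfies λ₂(ℒ) ≥ 2/(N²R²). -/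
/-!
Encode the `r`-th partition by the map `c r` sending an element to the index of its block, so
that the vertices of `G` containing `n` are the `⟨r, c r n⟩`. Double counting over elements
rewrites every quantity of `G` as a sum over elements: a block `A` has degree `(R - 1) |A|`, and
the cut of `U` is `∑ₙ aₙ (R - aₙ)`, where `aₙ` counts the vertices in `U` containing `n`.

Cheeger bound: for a proper nonempty `U` with positive cut, some element has `0 < aₙ < R`, so the
cut is at least `R - 1`, while `min (vol U) (vol Uᶜ)` is at most half the volume `(R - 1) N R`.

Eigenvalue bound: with `y = D^{-1/2} x`, an eigenvector for `λ ≠ 0` satisfies `∑ δᵢ yᵢ = 0` and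
`∑ wᵢⱼ (yᵢ - yⱼ)² = 2 λ ∑ δᵢ yᵢ²`. Since `G` is connected, so is the graph on elements joining
two elements that share a block. Along a path of at most `N` elements, `y` changes only through
its oscillation over the `R` vertices containing each element, so Cauchy–Schwarz bounds every
`(y ⟨r, c r n⟩ - y ⟨r', c r' n'⟩)²` by `N / 2` times the energy, and summing over the `N R`
pairs `(n, r)` gives `λ ≥ 2 / (N² R (R - 1))`.
-/

open Finset

noncomputable section

section WeightedGraph

variable {V : Type*} [Fintype V] {w : V → V → ℝ} {δ : V → ℝ}

theorem sum_mul_eq_sum_degree_mul (hsymm : ∀ i j, w i j = w j i)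
    (hδ : ∀ i, δ i = ∑ j, w i j) (g : V → ℝ) :
    ∑ i, ∑ j, w i j * g j = ∑ j, δ j * g j := by
  rw [sum_comm]
  refine sum_congr rfl fun j _ => ?_
  simp_rw [← sum_mul, hδ, hsymm j]

variable {lam : ℝ} {y : V → ℝ}

theorem sum_degree_mul_eq_zero_of_eigen (hsymm : ∀ i j, w i j = w j i)
    (hδ : ∀ i, δ i = ∑ j, w i j) (hgen : ∀ i, δ i * y i - ∑ j, w i j * y j = lam * (δ i * y i))
    (hlam : lam ≠ 0) :
    ∑ i, δ i * y i = 0 := by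
  have h := sum_congr rfl fun i (_ : i ∈ univ) => hgen i
  rw [sum_sub_distrib, sum_mul_eq_sum_degree_mul hsymm hδ, sub_self, ← mul_sum] at h
  exact (mul_eq_zero.1 h.symm).resolve_left hlam

theorem sum_sum_mul_sq_sub_eq_of_eigen (hsymm : ∀ i j, w i j = w j i)
    (hδ : ∀ i, δ i = ∑ j, w i j) (hgen : ∀ i, δ i * y i - ∑ j, w i j * y j = lam * (δ i * y i)) :
    ∑ i, ∑ j, w i j * (y i - y j) ^ 2 = 2 * lam * ∑ i, δ i * y i ^ 2 := by
  have hrow : ∑ i, ∑ j, w i j * y i ^ 2 = ∑ i, δ i * y i ^ 2 := by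
    simp_rw [← sum_mul, hδ]
  have hcross : ∀ i, ∑ j, w i j * y j = (1 - lam) * (δ i * y i) := fun i => by
    linarith [hgen i]
  have hexp : ∀ i j, w i j * (y i - y j) ^ 2
      = w i j * y i ^ 2 + w i j * y j ^ 2 - 2 * y i * (w i j * y j) := fun i j => by ring
  simp_rw [hexp, sum_sub_distrib, sum_add_distrib, hrow, sum_mul_eq_sum_degree_mul hsymm hδ,
    ← mul_sum, hcross, mul_sum, ← sum_add_distrib, ← sum_sub_distrib]
  exact sum_congr rfl fun i _ => by ring

theorem degree_mul_sub_sum_eq_of_mulVec_eq_smul [DecidableEq V] (hδpos : ∀ i, 0 < δ i)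
    (hw0 : ∀ i, w i i = 0) {L : Matrix V V ℝ}
    (hL : ∀ i j, L i j = (if i = j then δ i else -(w i j)) / √(δ i * δ j))
    {x : V → ℝ} (heig : L.mulVec x = lam • x) (i : V) :
    δ i * (x i / √(δ i)) - ∑ j, w i j * (x j / √(δ j)) = lam * (δ i * (x i / √(δ i))) := by
  have hsq : ∀ j, √(δ j) ≠ 0 := fun j => (Real.sqrt_pos.2 (hδpos j)).ne'
  have hterm : ∀ j, L i j * x j
      = ((if i = j then δ i else 0) * (x j / √(δ j)) - w i j * (x j / √(δ j))) / √(δ i) := by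
    intro j
    rw [hL, Real.sqrt_mul (hδpos i).le]
    split_ifs with h
    · subst h; rw [hw0]; field_simp; ring
    · field_simp; ring
  have hrow := congrFun heig i
  simp only [Matrix.mulVec, dotProduct, hterm, Pi.smul_apply, smul_eq_mul, ← sum_div,
    sum_sub_distrib, ite_mul, zero_mul, sum_ite_eq, mem_univ, if_true] at hrow
  rw [div_eq_iff (hsq i)] at hrow
  rw [hrow]
  field_simp
  rw [eq_div_iff (hsq i), mul_assoc, Real.mul_self_sqrt (hδpos i).le]

end WeightedGraph

section Poincare

theorem sum_sum_sq_sub_eq {κ : Type*} [Fintype κ] (f : κ → ℝ) :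
    ∑ p, ∑ q, (f p - f q) ^ 2 = 2 * Fintype.card κ * ∑ p, f p ^ 2 - 2 * (∑ p, f p) ^ 2 := by
  simp only [sub_sq, sum_add_distrib, sum_sub_distrib, sum_const, card_univ, nsmul_eq_mul,
    ← mul_sum, ← sum_mul]
  ring

theorem four_mul_sum_sq_le_of_sum_eq_zero {κ : Type*} [Fintype κ] {f : κ → ℝ}
    (hf : ∑ p, f p = 0) {C : ℝ} (hC : ∀ p q, 2 * (f p - f q) ^ 2 ≤ C) :
    4 * ∑ p, f p ^ 2 ≤ Fintype.card κ * C := by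
  rcases isEmpty_or_nonempty κ with hκ | hκ
  · simp
  have hK : (0 : ℝ) < Fintype.card κ := by exact_mod_cast Fintype.card_pos
  have hpairs : ∑ p, ∑ q, 2 * (f p - f q) ^ 2 ≤ ∑ p : κ, ∑ q : κ, C :=
    sum_le_sum fun p _ => sum_le_sum fun q _ => hC p q
  simp only [← mul_sum, sum_sum_sq_sub_eq, hf, sum_const, card_univ, nsmul_eq_mul] at hpairs
  nlinarith

theorem two_mul_sq_sub_le_sum_sum_sq_sub {ι : Type*} [Fintype ι] (g : ι → ℝ) (r r' : ι) :
    2 * (g r - g r') ^ 2 ≤ ∑ s, ∑ t, (g s - g t) ^ 2 := by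
  rcases eq_or_ne r r' with rfl | hne
  · rw [sub_self, zero_pow two_ne_zero, mul_zero]; positivity
  have hrow : ∀ s t, (g s - g t) ^ 2 ≤ ∑ t', (g s - g t') ^ 2 := fun s t =>
    single_le_sum (f := fun t' => (g s - g t') ^ 2) (fun _ _ => sq_nonneg _) (mem_univ t)
  calc 2 * (g r - g r') ^ 2 = (g r - g r') ^ 2 + (g r' - g r) ^ 2 := by ring
    _ ≤ ∑ t, (g r - g t) ^ 2 + ∑ t, (g r' - g t) ^ 2 := add_le_add (hrow r r') (hrow r' r)
    _ ≤ ∑ s, ∑ t, (g s - g t) ^ 2 :=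
        add_le_sum (f := fun s => ∑ t, (g s - g t) ^ 2)
          (fun s _ => sum_nonneg fun _ _ => sq_nonneg _) (mem_univ r) (mem_univ r') hne

theorem two_mul_sq_add_le {x y a b l : ℝ} (hl : 0 ≤ l) (hx : 2 * x ^ 2 ≤ a)
    (hy : 2 * y ^ 2 ≤ (l + 1) * b) : 2 * (x + y) ^ 2 ≤ (l + 2) * (a + b) := by
  have hl1 : 0 < l + 1 := by linarith
  refine le_of_mul_le_mul_left ?_ hl1
  -- `(l + 1) (x + y)² ≤ (l + 1) (l + 2) x² + (l + 2) y²` is `((l + 1) x - y)² ≥ 0`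
  nlinarith [sq_nonneg ((l + 1) * x - y),
    mul_le_mul_of_nonneg_left hx (by positivity : 0 ≤ (l + 1) * (l + 2)),
    mul_le_mul_of_nonneg_left hy (by positivity : 0 ≤ l + 2)]

variable {α ι : Type*} [Fintype ι] {H : SimpleGraph α} {u : α → ι → ℝ}

theorem two_mul_sq_sub_le_of_walk (hadj : ∀ a b, H.Adj a b → ∃ r, u a r = u b r)
    {a b : α} (P : H.Walk a b) (r r' : ι) :
    2 * (u a r - u b r') ^ 2
      ≤ (P.length + 1) * (P.support.map fun n => ∑ s, ∑ t, (u n s - u n t) ^ 2).sum := by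
  induction P generalizing r with
  | nil => simpa using two_mul_sq_sub_le_sum_sum_sq_sub (u _) r r'
  | @cons a c b hac P ih =>
    obtain ⟨r₀, hr₀⟩ := hadj a c hac
    have hsplit : u a r - u b r' = (u a r - u a r₀) + (u c r₀ - u b r') := by rw [hr₀]; ring
    simp only [SimpleGraph.Walk.length_cons, SimpleGraph.Walk.support_cons, List.map_cons,
      List.sum_cons, hsplit]
    push_cast
    rw [add_assoc, one_add_one_eq_two]
    exact two_mul_sq_add_le (by positivity) (two_mul_sq_sub_le_sum_sum_sq_sub (u a) r r₀) (ih r₀)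

theorem two_mul_sq_sub_le_of_preconnected [Fintype α] (hH : H.Preconnected)
    (hadj : ∀ a b, H.Adj a b → ∃ r, u a r = u b r) (a b : α) (r r' : ι) :
    2 * (u a r - u b r') ^ 2 ≤ Fintype.card α * ∑ n, ∑ s, ∑ t, (u n s - u n t) ^ 2 := by
  classical
  obtain ⟨P, hP⟩ := (hH a b).some.toPath
  have hlen : (P.length + 1 : ℝ) ≤ Fintype.card α := by
    have := hP.support_nodup.length_le_card
    rw [P.length_support] at this
    exact_mod_cast this
  have hsum : (P.support.map fun n => ∑ s, ∑ t, (u n s - u n t) ^ 2).sum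
      ≤ ∑ n, ∑ s, ∑ t, (u n s - u n t) ^ 2 := by
    rw [← List.sum_toFinset _ hP.support_nodup]
    exact sum_le_sum_of_subset_of_nonneg (subset_univ _) fun _ _ _ => by positivity
  calc 2 * (u a r - u b r') ^ 2
      ≤ (P.length + 1) * (P.support.map fun n => ∑ s, ∑ t, (u n s - u n t) ^ 2).sum :=
        two_mul_sq_sub_le_of_walk hadj P r r'
    _ ≤ Fintype.card α * ∑ n, ∑ s, ∑ t, (u n s - u n t) ^ 2 :=
        mul_le_mul_of_nonneg_right hlen (List.sum_nonneg fun _ hm => by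
          obtain ⟨n, -, rfl⟩ := List.mem_map.1 hm
          positivity) |>.trans (mul_le_mul_of_nonneg_left hsum (by positivity))

end Poincare

namespace BlockPartition

variable {ι α : Type*} {β : ι → Type*} (c : (r : ι) → α → β r)

theorem sum_sum_filter_eq [Fintype ι] [∀ r, Fintype (β r)] [∀ r, DecidableEq (β r)]
    {M : Type*} [AddCommMonoid M] (s : Finset α) (g : α → (r : ι) × β r → M) :
    ∑ i, ∑ n ∈ s with c i.1 n = i.2, g n i = ∑ n ∈ s, ∑ r, g n ⟨r, c r n⟩ := by
  rw [← univ_sigma_univ, sum_sigma, sum_comm]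
  refine sum_congr rfl fun r _ => ?_
  rw [← sum_fiberwise s (c r) fun n => g n ⟨r, c r n⟩]
  exact sum_congr rfl fun m _ => sum_congr rfl fun n hn => by rw [(mem_filter.1 hn).2]

def sharedBlockGraph : SimpleGraph α := SimpleGraph.fromRel fun n n' => ∃ r, c r n = c r n'

theorem sharedBlockGraph_reachable_of_eq {n n' : α} {r : ι} (h : c r n = c r n') :
    (sharedBlockGraph c).Reachable n n' := by
  rcases eq_or_ne n n' with rfl | hne
  · rfl
  · exact SimpleGraph.Adj.reachable <| (SimpleGraph.fromRel_adj _ _ _).2 ⟨hne, .inl ⟨r, h⟩⟩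

theorem sharedBlockGraph_preconnected [Fintype ι] [∀ r, Fintype (β r)] [Nonempty ι]
    (h : ∀ U : Finset ((r : ι) × β r), U.Nonempty → U ≠ univ →
      ∃ n r r', (⟨r, c r n⟩ : (r : ι) × β r) ∈ U ∧ (⟨r', c r' n⟩ : (r : ι) × β r) ∉ U) :
    (sharedBlockGraph c).Preconnected := by
  classical
  intro n₀ n₁
  obtain ⟨r₀⟩ := ‹Nonempty ι›
  -- the blocks meeting the component of `n₀`: no element is split by this set
  let U : Finset ((r : ι) × β r) := {i | ∃ n, (sharedBlockGraph c).Reachable n₀ n ∧ c i.1 n = i.2}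
  have hU : ∀ n r, (⟨r, c r n⟩ : (r : ι) × β r) ∈ U ↔ (sharedBlockGraph c).Reachable n₀ n := by
    refine fun n r => ⟨fun hmem => ?_, fun hn => mem_filter.2 ⟨mem_univ _, n, hn, rfl⟩⟩
    obtain ⟨m, hm, hmn⟩ := (mem_filter.1 hmem).2
    exact hm.trans (sharedBlockGraph_reachable_of_eq c hmn)
  by_contra hn₁
  obtain ⟨n, r, r', hr, hr'⟩ := h U ⟨_, (hU n₀ r₀).2 .rfl⟩
    fun hUuniv => hn₁ <| (hU n₁ r₀).1 (hUuniv ▸ mem_univ _)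
  exact hr' <| (hU n r').2 <| (hU n r).1 hr

variable [DecidableEq ι] [∀ r, DecidableEq (β r)] [Fintype α]

/-- With `c r n` the block of the `r`-th partition containing `n`, this is `|A_i ∩ A_j|` off the
diagonal. -/
def overlap (i j : (r : ι) × β r) : ℝ :=
  if i = j then 0 else #{n | c i.1 n = i.2 ∧ c j.1 n = j.2}

theorem overlap_comm (i j : (r : ι) × β r) : overlap c i j = overlap c j i := by
  simp only [overlap, eq_comm (a := i), and_comm]

@[simp]
theorem overlap_self (i : (r : ι) × β r) : overlap c i i = 0 := if_pos rfl

theorem overlap_nonneg (i j : (r : ι) × β r) : 0 ≤ overlap c i j := by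
  unfold overlap; split_ifs <;> positivity

variable [Fintype ι] [∀ r, Fintype (β r)]

theorem sum_sum_overlap_mul (F : (r : ι) × β r → (r : ι) × β r → ℝ) (hF : ∀ i, F i i = 0) :
    ∑ i, ∑ j, overlap c i j * F i j = ∑ n, ∑ r, ∑ r', F ⟨r, c r n⟩ ⟨r', c r' n⟩ := by
  have hterm : ∀ i j, overlap c i j * F i j
      = ∑ n ∈ {n | c i.1 n = i.2} with c j.1 n = j.2, F i j := by
    intro i j
    rw [sum_const, filter_filter, nsmul_eq_mul, overlap]
    split_ifs with h
    · simp [h, hF]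
    · rfl
  simp_rw [hterm, sum_sum_filter_eq c]

theorem sum_overlap (i : (r : ι) × β r) :
    ∑ j, overlap c i j = (Fintype.card ι - 1) * #{n | c i.1 n = i.2} := by
  have hsplit : ∀ j, overlap c i j = (#{n | c i.1 n = i.2 ∧ c j.1 n = j.2} : ℝ)
      - if i = j then (#{n | c i.1 n = i.2} : ℝ) else 0 := by
    intro j
    rw [overlap]
    split_ifs with h
    · subst h; simp
    · rw [sub_zero]
  have hcount : ∀ j : (r : ι) × β r, (#{n | c i.1 n = i.2 ∧ c j.1 n = j.2} : ℝ)
      = ∑ n ∈ {n | c i.1 n = i.2} with c j.1 n = j.2, 1 := by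
    intro j; rw [filter_filter]; simp
  simp_rw [hsplit, sum_sub_distrib, hcount, sum_sum_filter_eq c, sum_ite_eq, mem_univ, if_true]
  simp [sub_one_mul, mul_comm]

theorem sum_degree_mul (g : (r : ι) × β r → ℝ) :
    ∑ i, (∑ j, overlap c i j) * g i = (Fintype.card ι - 1) * ∑ n, ∑ r, g ⟨r, c r n⟩ := by
  simp_rw [sum_overlap, mul_assoc, ← mul_sum]
  congr 1
  simpa using sum_sum_filter_eq c univ fun _ i => g i

theorem cut_eq_sum_card_mul_card (U : Finset ((r : ι) × β r)) :
    ∑ i ∈ U, ∑ j ∈ Uᶜ, overlap c i j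
      = ∑ n, (#{r | ⟨r, c r n⟩ ∈ U} : ℝ) * #{r | ⟨r, c r n⟩ ∉ U} := by
  calc ∑ i ∈ U, ∑ j ∈ Uᶜ, overlap c i j
      = ∑ i, ∑ j, overlap c i j * ((if i ∈ U then 1 else 0) * if j ∉ U then 1 else 0) := by
        rw [← sum_ite_mem_eq U]
        refine sum_congr rfl fun i _ => ?_
        rw [← sum_ite_mem_eq Uᶜ]
        split_ifs <;> simp_all
    _ = ∑ n, ∑ r, ∑ r',
          (if (⟨r, c r n⟩ : (r : ι) × β r) ∈ U then 1 else 0) *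
            if (⟨r', c r' n⟩ : (r : ι) × β r) ∉ U then 1 else 0 :=
        sum_sum_overlap_mul c _ fun i => by split_ifs <;> simp
    _ = _ := by
        refine sum_congr rfl fun n _ => ?_
        rw [← sum_mul_sum, sum_boole, sum_boole]

theorem exists_mem_notMem_of_cut_pos {U : Finset ((r : ι) × β r)}
    (h : 0 < ∑ i ∈ U, ∑ j ∈ Uᶜ, overlap c i j) :
    ∃ n r r', (⟨r, c r n⟩ : (r : ι) × β r) ∈ U ∧ (⟨r', c r' n⟩ : (r : ι) × β r) ∉ U := by
  rw [cut_eq_sum_card_mul_card] at h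
  obtain ⟨n, -, hn⟩ := exists_lt_of_sum_lt (f := fun _ => (0 : ℝ)) (by simpa using h)
  norm_cast at hn
  obtain ⟨⟨r, hr⟩, ⟨r', hr'⟩⟩ := (CanonicallyOrderedAdd.mul_pos.1 hn).imp card_pos.1 card_pos.1
  exact ⟨n, r, r', (mem_filter.1 hr).2, (mem_filter.1 hr').2⟩

theorem card_sub_one_le_cut {U : Finset ((r : ι) × β r)}
    (h : 0 < ∑ i ∈ U, ∑ j ∈ Uᶜ, overlap c i j) :
    (Fintype.card ι : ℝ) - 1 ≤ ∑ i ∈ U, ∑ j ∈ Uᶜ, overlap c i j := by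
  obtain ⟨n, r, r', hr, hr'⟩ := exists_mem_notMem_of_cut_pos c h
  have hsplit := card_filter_add_card_filter_not (s := univ)
    fun r => (⟨r, c r n⟩ : (r : ι) × β r) ∈ U
  have hin : (1 : ℝ) ≤ #{r | (⟨r, c r n⟩ : (r : ι) × β r) ∈ U} :=
    Nat.one_le_cast.2 <| card_pos.2 ⟨r, by simpa using hr⟩
  have hout : (1 : ℝ) ≤ #{r | (⟨r, c r n⟩ : (r : ι) × β r) ∉ U} :=
    Nat.one_le_cast.2 <| card_pos.2 ⟨r', by simpa using hr'⟩
  rw [cut_eq_sum_card_mul_card]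
  refine le_trans ?_ (single_le_sum (fun n _ => by positivity) (mem_univ n))
  rw [← card_univ, ← hsplit, Nat.cast_add]
  -- `a + b - 1 ≤ a b` is `(a - 1) (b - 1) ≥ 0`
  nlinarith

theorem sum_overlap_pos (hι : 2 ≤ Fintype.card ι) {i : (r : ι) × β r} (hi : ∃ n, c i.1 n = i.2) :
    0 < ∑ j, overlap c i j := by
  obtain ⟨n, hn⟩ := hi
  have hι' : (1 : ℝ) < Fintype.card ι := by exact_mod_cast hι
  rw [sum_overlap]
  exact mul_pos (by linarith) (Nat.cast_pos.2 (card_pos.2 ⟨n, by simpa using hn⟩))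

theorem two_div_le_cut_div_min_vol (hι : 2 ≤ Fintype.card ι)
    (hne : ∀ i : (r : ι) × β r, ∃ n, c i.1 n = i.2) {U : Finset ((r : ι) × β r)}
    (hU : U.Nonempty) (hUuniv : U ≠ univ) (hcut : 0 < ∑ i ∈ U, ∑ j ∈ Uᶜ, overlap c i j) :
    2 / (Fintype.card α * Fintype.card ι) ≤ (∑ i ∈ U, ∑ j ∈ Uᶜ, overlap c i j) /
      min (∑ i ∈ U, ∑ j, overlap c i j) (∑ i ∈ Uᶜ, ∑ j, overlap c i j) := by
  have hUc : Uᶜ.Nonempty := nonempty_iff_ne_empty.2 <| by rwa [Ne, compl_eq_empty_iff]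
  have hvol : ∀ {W : Finset ((r : ι) × β r)}, W.Nonempty → 0 < ∑ i ∈ W, ∑ j, overlap c i j :=
    fun hW => sum_pos (fun i _ => sum_overlap_pos c hι (hne i)) hW
  have htotal : ∑ i ∈ U, ∑ j, overlap c i j + ∑ i ∈ Uᶜ, ∑ j, overlap c i j
      = (Fintype.card ι - 1) * (Fintype.card α * Fintype.card ι) := by
    simpa [sum_add_sum_compl, mul_comm] using sum_degree_mul c fun _ => 1
  have hι' : (0 : ℝ) < Fintype.card ι - 1 := by
    have : (2 : ℝ) ≤ Fintype.card ι := by exact_mod_cast hι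
    linarith
  calc 2 / (Fintype.card α * Fintype.card ι : ℝ)
      = (Fintype.card ι - 1) / ((Fintype.card ι - 1) * (Fintype.card α * Fintype.card ι) / 2) := by
        field_simp [hι'.ne']
    _ ≤ _ := div_le_div₀ hcut.le (card_sub_one_le_cut c hcut)
        (lt_min (hvol hU) (hvol hUc)) <| by
          rw [← htotal, le_div_iff₀ two_pos, mul_two]
          exact add_le_add (min_le_left _ _) (min_le_right _ _)

theorem two_div_le_cheeger (hι : 2 ≤ Fintype.card ι)
    (hne : ∀ i : (r : ι) × β r, ∃ n, c i.1 n = i.2)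
    (hconn : ∀ U : Finset ((r : ι) × β r), U.Nonempty → U ≠ univ →
      0 < ∑ i ∈ U, ∑ j ∈ Uᶜ, overlap c i j) :
    2 / (Fintype.card α * Fintype.card ι) ≤ sInf {t | ∃ U : Finset ((r : ι) × β r),
      U.Nonempty ∧ U ≠ univ ∧ t = (∑ i ∈ U, ∑ j ∈ Uᶜ, overlap c i j) /
        min (∑ i ∈ U, ∑ j, overlap c i j) (∑ i ∈ Uᶜ, ∑ j, overlap c i j)} := by
  rcases isEmpty_or_nonempty α with hα | hα
  · have hnonneg : ∀ U V : Finset ((r : ι) × β r), 0 ≤ ∑ i ∈ U, ∑ j ∈ V, overlap c i j :=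
      fun U V => sum_nonneg fun i _ => sum_nonneg fun j _ => overlap_nonneg c i j
    rw [Fintype.card_eq_zero, Nat.cast_zero, zero_mul, div_zero]
    refine Real.sInf_nonneg ?_
    rintro _ ⟨U, -, -, rfl⟩
    exact div_nonneg (hnonneg _ _) (le_min (hnonneg _ _) (hnonneg _ _))
  obtain ⟨n₀⟩ := hα
  obtain ⟨r₀, r₁, hr⟩ := Fintype.one_lt_card_iff.1 hι
  have hsingle : {(⟨r₀, c r₀ n₀⟩ : (r : ι) × β r)} ≠ univ := fun h =>
    hr.symm <| congrArg Sigma.fst <| mem_singleton.1 <|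
      h ▸ mem_univ (⟨r₁, c r₁ n₀⟩ : (r : ι) × β r)
  refine le_csInf ⟨_, _, singleton_nonempty _, hsingle, rfl⟩ ?_
  rintro _ ⟨U, hU, hUuniv, rfl⟩
  exact two_div_le_cut_div_min_vol c hι hne hU hUuniv (hconn U hU hUuniv)

theorem four_mul_sum_sq_le_sum_overlap_mul_sq_sub [Nonempty ι]
    (hconn : ∀ U : Finset ((r : ι) × β r), U.Nonempty → U ≠ univ →
      0 < ∑ i ∈ U, ∑ j ∈ Uᶜ, overlap c i j)
    (y : (r : ι) × β r → ℝ) (hy : ∑ n, ∑ r, y ⟨r, c r n⟩ = 0) :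
    4 * ∑ n, ∑ r, y ⟨r, c r n⟩ ^ 2
      ≤ Fintype.card α ^ 2 * Fintype.card ι * ∑ i, ∑ j, overlap c i j * (y i - y j) ^ 2 := by
  have hH := sharedBlockGraph_preconnected c fun U hU hUuniv =>
    exists_mem_notMem_of_cut_pos c (hconn U hU hUuniv)
  let u : α → ι → ℝ := fun n r => y ⟨r, c r n⟩
  have hadj : ∀ a b, (sharedBlockGraph c).Adj a b → ∃ r, u a r = u b r := by
    intro a b hab
    obtain ⟨-, ⟨r, h⟩ | ⟨r, h⟩⟩ := (SimpleGraph.fromRel_adj _ _ _).1 hab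
    exacts [⟨r, by simp only [u, h]⟩, ⟨r, by simp only [u, h]⟩]
  have := four_mul_sum_sq_le_of_sum_eq_zero (f := fun p : α × ι => u p.1 p.2)
    (by rw [Fintype.sum_prod_type]; exact hy)
    fun p q => two_mul_sq_sub_le_of_preconnected hH hadj p.1 q.1 p.2 q.2
  rw [sum_sum_overlap_mul c _ fun i => by simp]
  simpa [Fintype.sum_prod_type, Fintype.card_prod, u, sq, mul_assoc, mul_left_comm] using this

theorem two_div_le_eigenvalue (hι : 2 ≤ Fintype.card ι)
    (hne : ∀ i : (r : ι) × β r, ∃ n, c i.1 n = i.2)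
    (hconn : ∀ U : Finset ((r : ι) × β r), U.Nonempty → U ≠ univ →
      0 < ∑ i ∈ U, ∑ j ∈ Uᶜ, overlap c i j)
    {δ : (r : ι) × β r → ℝ} (hδ : ∀ i, δ i = ∑ j, overlap c i j)
    {L : Matrix ((r : ι) × β r) ((r : ι) × β r) ℝ}
    (hL : ∀ i j, L i j = (if i = j then δ i else -(overlap c i j)) / √(δ i * δ j))
    {lam : ℝ} {x : (r : ι) × β r → ℝ} (hx : x ≠ 0) (heig : L.mulVec x = lam • x)
    (hlam : lam ≠ 0) :
    2 / (Fintype.card α ^ 2 * Fintype.card ι ^ 2) ≤ lam := by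
  have : Nonempty ι := Fintype.card_pos_iff.1 (by omega)
  have hι' : (1 : ℝ) ≤ Fintype.card ι - 1 := by
    have : (2 : ℝ) ≤ Fintype.card ι := by exact_mod_cast hι
    linarith
  have hδpos : ∀ i, 0 < δ i := fun i => hδ i ▸ sum_overlap_pos c hι (hne i)
  set y : (r : ι) × β r → ℝ := fun i => x i / √(δ i)
  have hgen : ∀ i, δ i * y i - ∑ j, overlap c i j * y j = lam * (δ i * y i) :=
    degree_mul_sub_sum_eq_of_mulVec_eq_smul hδpos (overlap_self c) hL heig
  have hmean := sum_degree_mul_eq_zero_of_eigen (overlap_comm c) hδ hgen hlam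
  have henergy := sum_sum_mul_sq_sub_eq_of_eigen (overlap_comm c) hδ hgen
  have hQpos : 0 < ∑ i, δ i * y i ^ 2 := by
    have hxy : ∀ i, δ i * y i ^ 2 = x i ^ 2 := fun i => by
      rw [div_pow, Real.sq_sqrt (hδpos i).le]; field_simp [(hδpos i).ne']
    obtain ⟨i, hi⟩ := Function.ne_iff.1 hx
    simp_rw [hxy]
    exact sum_pos' (fun i _ => sq_nonneg _) ⟨i, mem_univ i, pow_two_pos_of_ne_zero hi⟩
  have hδsum : ∀ g : (r : ι) × β r → ℝ,
      ∑ i, δ i * g i = (Fintype.card ι - 1) * ∑ n, ∑ r, g ⟨r, c r n⟩ := by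
    simpa [← hδ] using sum_degree_mul c
  rw [hδsum] at hmean hQpos henergy
  have hpoinc := four_mul_sum_sq_le_sum_overlap_mul_sq_sub c hconn y
    ((mul_eq_zero.1 hmean).resolve_left (by linarith))
  rw [henergy] at hpoinc
  have hZ := pos_of_mul_pos_right hQpos (by linarith)
  set Z := ∑ n, ∑ r, y ⟨r, c r n⟩ ^ 2
  set P : ℝ := Fintype.card α ^ 2 * Fintype.card ι
  have hk : 2 ≤ P * (Fintype.card ι - 1) * lam := by nlinarith
  have hPlam : 0 < P * lam := by nlinarith
  refine div_le_of_le_mul₀ (by positivity) (pos_of_mul_pos_right hPlam (by positivity)).le ?_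
  calc 2 ≤ P * (Fintype.card ι - 1) * lam + P * lam := by linarith
    _ = lam * (Fintype.card α ^ 2 * Fintype.card ι ^ 2) := by ring

end BlockPartition

theorem stmt6 {N R : ℕ} (hR : 2 ≤ R) (M : Fin R → ℕ)
    (A : (r : Fin R) → Fin (M r) → Finset (Fin N))
    (hAne : ∀ r m, (A r m).Nonempty)
    (hpart : ∀ (r : Fin R) (n : Fin N), ∃! m : Fin (M r), n ∈ A r m)
    -- the weighted graph on vertices (r, m)
    (w : ((r : Fin R) × Fin (M r)) → ((r : Fin R) × Fin (M r)) → ℝ)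
    (hw : ∀ i j, w i j = if i = j then 0 else ((A i.1 i.2 ∩ A j.1 j.2).card : ℝ))
    (δ : ((r : Fin R) × Fin (M r)) → ℝ) (hδ : ∀ i, δ i = ∑ j, w i j)
    (vol : Finset ((r : Fin R) × Fin (M r)) → ℝ) (hvol : ∀ U, vol U = ∑ i ∈ U, δ i)
    (cut : Finset ((r : Fin R) × Fin (M r)) → ℝ)
    (hcut : ∀ U, cut U = ∑ i ∈ U, ∑ j ∈ Uᶜ, w i j)
    -- G is connected
    (hconn : ∀ U : Finset ((r : Fin R) × Fin (M r)),
      U.Nonempty → U ≠ univ → 0 < cut U)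
    -- the Cheeger constant
    (hG : ℝ)
    (hhG : hG = sInf {t | ∃ U : Finset ((r : Fin R) × Fin (M r)),
      U.Nonempty ∧ U ≠ univ ∧ t = cut U / min (vol U) (vol Uᶜ)})
    -- the symmetric normalized Laplacian
    (L : Matrix ((r : Fin R) × Fin (M r)) ((r : Fin R) × Fin (M r)) ℝ)
    (hL : ∀ i j, L i j = (if i = j then δ i else -(w i j)) / Real.sqrt (δ i * δ j)) :
    2 / (N * R) ≤ hG ∧
    ∀ (lam : ℝ) (x : ((r : Fin R) × Fin (M r)) → ℝ),
      x ≠ 0 → L.mulVec x = lam • x → lam ≠ 0 → 2 / ((N : ℝ) ^ 2 * R ^ 2) ≤ lam := by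
  choose c hc using fun r n => (hpart r n).exists
  have hA : ∀ r m n, n ∈ A r m ↔ c r n = m := fun r m n =>
    ⟨fun h => (hpart r n).unique (hc r n) h, fun h => h ▸ hc r n⟩
  obtain rfl : w = BlockPartition.overlap c := by
    ext i j
    rw [hw, BlockPartition.overlap]
    congr 3
    ext n
    simp [hA]
  have hR' : 2 ≤ Fintype.card (Fin R) := by simpa using hR
  have hne : ∀ i : (r : Fin R) × Fin (M r), ∃ n, c i.1 n = i.2 := fun i =>
    (hAne i.1 i.2).imp fun n hn => (hA _ _ _).1 hn
  have hconn' := fun U hU hUuniv => hcut U ▸ hconn U hU hUuniv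
  refine ⟨?_, fun lam x hx heig hlam => ?_⟩
  · simp only [hhG, hcut, hvol, hδ]
    simpa using BlockPartition.two_div_le_cheeger c hR' hne hconn'
  · simpa using BlockPartition.two_div_le_eigenvalue c hR' hne hconn' hδ hL hx heig hlam
end
end
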